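/- arXiv:1101.3911 — 14 statements merged into one kernel-verified Lean document; each statement's English description precedes it below -/
import Mathlib

section
/- For every p > 1 and every x ∈ (0,1), the following two-sided bound holds: (1 + x^p/(p(1+p)))·x < arcsin_p(x) < (π_p/2)·x. -/
open Real

/-- The generalized inverse sine: `arcsin_p x = ∫₀ˣ (1 - tᵖ)^(-1/p) dt`. -/
noncomputable def arcsinp (p x : ℝ) : ℝ := ∫ t in (0:ℝ)..x, (1 - t ^ p) ^ (-1 / p)

/-- The generalized π: `π_p = 2π / (p sin(π/p))`. -/
noncomputable def pip (p : ℝ) : ℝ := 2 * π / (p * Real.sin (π / p))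

/-!
The integrand `f t = (1 - tᵖ)^(-1/p)` of `arcsin_p` is strictly increasing on `[0, 1)`, and
Bernoulli's inequality for the exponent `-1/p` gives `f t > 1 + tᵖ/p`; integrating this over
`[0, x]` yields the lower bound. For the upper bound, the mean of the increasing function `f` over
`[0, x]` is below its mean over `[0, 1]`, which is `arcsin_p 1 = π_p / 2`: the substitution
`t = u^(1/p)` turns that integral into the Beta integral `B(1/p, 1 - 1/p) / p`, and Euler's
reflection formula evaluates `Γ(1/p) Γ(1 - 1/p) = π / sin(π/p)`.
-/

open MeasureTheory Set intervalIntegral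

theorem integral_lt_integral_of_forall_Ioo_lt {f g : ℝ → ℝ} {a b : ℝ} (hab : a < b)
    (hf : IntervalIntegrable f volume a b) (hg : IntervalIntegrable g volume a b)
    (hlt : ∀ t ∈ Ioo a b, f t < g t) : ∫ t in a..b, f t < ∫ t in a..b, g t := by
  have := intervalIntegral_pos_of_pos_on (hg.sub hf) (fun t ht ↦ sub_pos.2 (hlt t ht)) hab
  rw [integral_sub hg hf] at this
  linarith

theorem integral_lt_mul_of_strictMonoOn {f : ℝ → ℝ} {a b : ℝ} (hab : a < b)
    (hf : StrictMonoOn f (Icc a b)) : ∫ t in a..b, f t < (b - a) * f b := by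
  have hfb : ∀ t ∈ Ioo a b, f t < f b := fun t ht ↦
    hf (Ioo_subset_Icc_self ht) (right_mem_Icc.2 hab.le) ht.2
  have hfi : IntervalIntegrable f volume a b :=
    (hf.monotoneOn.mono (uIcc_of_le hab.le).subset).intervalIntegrable
  simpa using integral_lt_integral_of_forall_Ioo_lt hab hfi intervalIntegrable_const hfb

theorem mul_le_integral_of_monotoneOn {f : ℝ → ℝ} {a b : ℝ} (hab : a ≤ b)
    (hf : MonotoneOn f (Ico a b)) (hfi : IntervalIntegrable f volume a b) :
    (b - a) * f a ≤ ∫ t in a..b, f t := by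
  have hfa : ∀ t ∈ Ioo a b, f a ≤ f t := fun t ht ↦
    hf (left_mem_Ico.2 (ht.1.trans ht.2)) (Ioo_subset_Ico_self ht) ht.1.le
  simpa using integral_mono_on_of_le_Ioo hab intervalIntegrable_const hfi hfa

theorem mul_integral_lt_mul_integral_of_strictMonoOn {f : ℝ → ℝ} {a b c : ℝ} (hab : a < b)
    (hbc : b < c) (hf : StrictMonoOn f (Ico a c)) (hfi : IntervalIntegrable f volume b c) :
    (c - a) * ∫ t in a..b, f t < (b - a) * ∫ t in a..c, f t := by
  have hf_ab : StrictMonoOn f (Icc a b) := hf.mono (Icc_subset_Ico_right hbc)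
  have hI := integral_lt_mul_of_strictMonoOn hab hf_ab
  have hJ := mul_le_integral_of_monotoneOn hbc.le
    (hf.monotoneOn.mono (Ico_subset_Ico_left hab.le)) hfi
  rw [← integral_add_adjacent_intervals
    (hf_ab.monotoneOn.mono (uIcc_of_le hab.le).subset).intervalIntegrable hfi]
  linarith [mul_lt_mul_of_pos_left hI (sub_pos.2 hbc),
    mul_le_mul_of_nonneg_left hJ (sub_pos.2 hab).le]

theorem one_add_mul_lt_one_sub_rpow_neg {q u : ℝ} (hq0 : 0 < q) (hq1 : q < 1) (hu0 : u ≠ 0)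
    (hu1 : u < 1) : 1 + q * u < (1 - u) ^ (-q) := by
  have hqu : 0 < 1 - q * u := by
    rcases le_or_gt u 0 with hu | hu <;> nlinarith
  have hB : (1 - u) ^ q < 1 - q * u := by
    simpa [← sub_eq_add_neg] using
      rpow_one_add_lt_one_add_mul_self (s := -u) (by linarith) (neg_ne_zero.2 hu0) hq0 hq1
  calc 1 + q * u ≤ 1 / (1 - q * u) := by
        rw [le_div_iff₀ hqu]
        nlinarith [sq_nonneg (q * u)]
    _ < 1 / (1 - u) ^ q := one_div_lt_one_div_of_lt (by positivity) hB
    _ = (1 - u) ^ (-q) := by rw [rpow_neg (by linarith), one_div]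

theorem ofReal_rpow_mul_one_sub_rpow {a b u : ℝ} (hu0 : 0 ≤ u) (hu1 : u ≤ 1) :
    ((u ^ (a - 1) * (1 - u) ^ (b - 1) : ℝ) : ℂ)
      = (u : ℂ) ^ ((a : ℂ) - 1) * (1 - (u : ℂ)) ^ ((b : ℂ) - 1) := by
  rw [Complex.ofReal_mul, Complex.ofReal_cpow hu0, Complex.ofReal_cpow (sub_nonneg.2 hu1)]
  push_cast
  rfl

theorem intervalIntegrable_rpow_mul_one_sub_rpow {a b : ℝ} (ha : 0 < a) (hb : 0 < b) :
    IntervalIntegrable (fun u ↦ u ^ (a - 1) * (1 - u) ^ (b - 1)) volume 0 1 := by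
  have h := (Complex.betaIntegral_convergent (u := a) (v := b) (by simpa) (by simpa)).congr
    (g := fun u ↦ ((u ^ (a - 1) * (1 - u) ^ (b - 1) : ℝ) : ℂ)) fun u hu ↦ by
      rw [uIoc_of_le zero_le_one] at hu
      exact (ofReal_rpow_mul_one_sub_rpow hu.1.le hu.2).symm
  rw [intervalIntegrable_iff] at h ⊢
  simpa [IntegrableOn] using h.re

theorem integral_rpow_mul_one_sub_rpow {a b : ℝ} (ha : 0 < a) (hb : 0 < b) :
    ∫ u in (0 : ℝ)..1, u ^ (a - 1) * (1 - u) ^ (b - 1) = Gamma a * Gamma b / Gamma (a + b) := by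
  have h := Complex.Gamma_mul_Gamma_eq_betaIntegral (s := a) (t := b) (by simpa) (by simpa)
  have hbeta : Complex.betaIntegral a b =
      ((∫ u in (0 : ℝ)..1, u ^ (a - 1) * (1 - u) ^ (b - 1) : ℝ) : ℂ) := by
    rw [Complex.betaIntegral, ← integral_ofReal]
    refine integral_congr fun u hu ↦ ?_
    rw [uIcc_of_le zero_le_one] at hu
    exact (ofReal_rpow_mul_one_sub_rpow hu.1 hu.2).symm
  rw [hbeta, ← Complex.ofReal_add, Complex.Gamma_ofReal, Complex.Gamma_ofReal,
    Complex.Gamma_ofReal] at h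
  rw [eq_div_iff (Gamma_pos_of_pos (add_pos ha hb)).ne']
  exact_mod_cast (h.trans (mul_comm _ _)).symm

section RpowSubstitution

variable {E : Type*} [NormedAddCommGroup E] [NormedSpace ℝ E]

theorem image_rpow_Ioo_zero_one {q : ℝ} (hq : 0 < q) : (· ^ q) '' Ioo (0 : ℝ) 1 = Ioo 0 1 := by
  ext y
  constructor
  · rintro ⟨x, hx, rfl⟩
    exact ⟨rpow_pos_of_pos hx.1 q, rpow_lt_one hx.1.le hx.2 hq⟩
  · intro hy
    refine ⟨y ^ q⁻¹, ⟨rpow_pos_of_pos hy.1 _, rpow_lt_one hy.1.le hy.2 (inv_pos.2 hq)⟩, ?_⟩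
    simp [← rpow_mul hy.1.le, hq.ne']

theorem hasDerivWithinAt_rpow_Ioo_zero_one (q : ℝ) :
    ∀ x ∈ Ioo (0 : ℝ) 1, HasDerivWithinAt (· ^ q) (q * x ^ (q - 1)) (Ioo 0 1) x :=
  fun _ hx ↦ (hasDerivAt_rpow_const (Or.inl hx.1.ne')).hasDerivWithinAt

theorem injOn_rpow_Ioo_zero_one {q : ℝ} (hq : q ≠ 0) : InjOn (· ^ q) (Ioo (0 : ℝ) 1) :=
  (rpow_left_injOn hq).mono fun _ hx ↦ hx.1.le

theorem integral_comp_rpow_Ioo_zero_one {q : ℝ} (hq : 0 < q) (g : ℝ → E) :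
    ∫ x in Ioo 0 1, (q * x ^ (q - 1)) • g (x ^ q) = ∫ y in Ioo 0 1, g y := by
  conv_rhs => rw [← image_rpow_Ioo_zero_one hq]
  rw [integral_image_eq_integral_abs_deriv_smul measurableSet_Ioo
    (hasDerivWithinAt_rpow_Ioo_zero_one q) (injOn_rpow_Ioo_zero_one hq.ne')]
  refine setIntegral_congr_fun measurableSet_Ioo fun x hx ↦ ?_
  rw [abs_of_nonneg (by have := hx.1; positivity)]

theorem integrableOn_comp_rpow_Ioo_zero_one_iff {q : ℝ} (hq : 0 < q) (g : ℝ → E) :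
    IntegrableOn (fun x ↦ (q * x ^ (q - 1)) • g (x ^ q)) (Ioo 0 1) ↔
      IntegrableOn g (Ioo 0 1) := by
  conv_rhs => rw [← image_rpow_Ioo_zero_one hq]
  rw [integrableOn_image_iff_integrableOn_abs_deriv_smul measurableSet_Ioo
    (hasDerivWithinAt_rpow_Ioo_zero_one q) (injOn_rpow_Ioo_zero_one hq.ne')]
  refine integrableOn_congr_fun (fun x hx ↦ ?_) measurableSet_Ioo
  rw [abs_of_nonneg (by have := hx.1; positivity)]

end RpowSubstitution

theorem strictMonoOn_arcsinp_integrand {p : ℝ} (hp : 0 < p) :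
    StrictMonoOn (fun t : ℝ ↦ (1 - t ^ p) ^ (-1 / p)) (Ico 0 1) := by
  intro s hs t ht hst
  have htp : t ^ p < 1 := rpow_lt_one ht.1 ht.2 hp
  exact rpow_lt_rpow_of_neg (by linarith) (by linarith [rpow_lt_rpow hs.1 hst hp])
    (div_neg_of_neg_of_pos neg_one_lt_zero hp)

theorem one_add_rpow_div_lt_arcsinp_integrand {p t : ℝ} (hp : 1 < p) (ht0 : 0 < t)
    (ht1 : t < 1) : 1 + t ^ p / p < (1 - t ^ p) ^ (-1 / p) := by
  have hp0 : 0 < p := zero_lt_one.trans hp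
  simpa [neg_div, div_eq_inv_mul] using one_add_mul_lt_one_sub_rpow_neg (inv_pos.2 hp0)
    (inv_lt_one_of_one_lt₀ hp) (rpow_pos_of_pos ht0 p).ne' (rpow_lt_one ht0.le ht1 hp0)

theorem integral_one_add_rpow_div {p x : ℝ} (hp : 0 < p) (hx : 0 ≤ x) :
    ∫ t in (0 : ℝ)..x, (1 + t ^ p / p) = (1 + x ^ p / (p * (1 + p))) * x := by
  rw [integral_add intervalIntegrable_const ((intervalIntegrable_rpow' (by linarith)).div_const p),
    intervalIntegral.integral_div, integral_rpow (Or.inl (by linarith)),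
    intervalIntegral.integral_const, zero_rpow (by positivity), rpow_add_one' hx (by positivity)]
  field_simp
  ring

theorem arcsinp_integrand_comp_rpow_inv {p : ℝ} (hp : 0 < p) :
    EqOn (fun u ↦ (p⁻¹ * u ^ (p⁻¹ - 1)) • (1 - (u ^ p⁻¹) ^ p) ^ (-1 / p))
      (fun u ↦ p⁻¹ * (u ^ (p⁻¹ - 1) * (1 - u) ^ ((1 - p⁻¹) - 1))) (Ioo 0 1) := by
  intro u hu
  simp only [smul_eq_mul, ← rpow_mul hu.1.le, inv_mul_cancel₀ hp.ne', rpow_one]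
  ring_nf

theorem intervalIntegrable_arcsinp_integrand {p : ℝ} (hp : 1 < p) :
    IntervalIntegrable (fun t : ℝ ↦ (1 - t ^ p) ^ (-1 / p)) volume 0 1 := by
  have hp0 : 0 < p := zero_lt_one.trans hp
  have hbeta := (intervalIntegrable_rpow_mul_one_sub_rpow (inv_pos.2 hp0)
    (sub_pos.2 (inv_lt_one_of_one_lt₀ hp))).const_mul p⁻¹
  rw [intervalIntegrable_iff_integrableOn_Ioo_of_le zero_le_one] at hbeta ⊢
  rw [← integrableOn_comp_rpow_Ioo_zero_one_iff (inv_pos.2 hp0)]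
  exact hbeta.congr_fun (arcsinp_integrand_comp_rpow_inv hp0).symm measurableSet_Ioo

theorem arcsinp_one {p : ℝ} (hp : 1 < p) : arcsinp p 1 = pip p / 2 := by
  have hp0 : 0 < p := zero_lt_one.trans hp
  have hsin : 0 < sin (π / p) :=
    sin_pos_of_pos_of_lt_pi (by positivity) (div_lt_self pi_pos hp)
  rw [arcsinp, integral_of_le zero_le_one, integral_Ioc_eq_integral_Ioo,
    ← integral_comp_rpow_Ioo_zero_one (inv_pos.2 hp0),
    setIntegral_congr_fun measurableSet_Ioo (arcsinp_integrand_comp_rpow_inv hp0),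
    MeasureTheory.integral_const_mul, ← integral_Ioc_eq_integral_Ioo,
    ← integral_of_le zero_le_one,
    integral_rpow_mul_one_sub_rpow (inv_pos.2 hp0) (sub_pos.2 (inv_lt_one_of_one_lt₀ hp)),
    add_sub_cancel, Gamma_one, div_one, Gamma_mul_Gamma_one_sub, pip]
  field_simp

theorem arcsinp_bounds (p x : ℝ) (hp : 1 < p) (hx : x ∈ Set.Ioo (0:ℝ) 1) :
    (1 + x ^ p / (p * (1 + p))) * x < arcsinp p x ∧
      arcsinp p x < pip p / 2 * x := by
  obtain ⟨hx0, hx1⟩ := hx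
  have hp0 : 0 < p := zero_lt_one.trans hp
  have hx' : x ∈ uIcc (0 : ℝ) 1 := by rw [uIcc_of_le zero_le_one]; exact ⟨hx0.le, hx1.le⟩
  have hf := intervalIntegrable_arcsinp_integrand hp
  constructor
  · rw [← integral_one_add_rpow_div hp0 hx0.le]
    exact integral_lt_integral_of_forall_Ioo_lt hx0
      (intervalIntegrable_const.add ((intervalIntegrable_rpow' (by linarith)).div_const p))
      (hf.mono_set (uIcc_subset_uIcc_left hx'))
      fun t ht ↦ one_add_rpow_div_lt_arcsinp_integrand hp ht.1 (ht.2.trans hx1)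
  · have h := mul_integral_lt_mul_integral_of_strictMonoOn hx0 hx1
      (strictMonoOn_arcsinp_integrand hp0) (hf.mono_set (uIcc_subset_uIcc_right hx'))
    rw [sub_zero, sub_zero, one_mul] at h
    rw [← arcsinp_one hp, mul_comm]
    exact h
end

section
/- For every p > 1 and every x ∈ (0,1), the following two-sided bound holds: (p(1+p)(1+x^p) + x^p)·x / (p(1+p)(1+x^p)^(1+1/p)) < arctan_p(x) < 2^(1/p)·b_p·(x^p/(1+x^p))^(1/p). -/
open Real

/-- The generalized inverse tangent: `arctan_p x = ∫₀ˣ (1 + tᵖ)⁻¹ dt`. -/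
noncomputable def arctanp (p x : ℝ) : ℝ := ∫ t in (0:ℝ)..x, (1 + t ^ p)⁻¹

/-- The constant `b_p = arctan_p 1`. -/
noncomputable def bp (p : ℝ) : ℝ := arctanp p 1

open Set

/-!
Write `g x = x / (1 + xᵖ)^(1/p)`, so that `g' = (1 + xᵖ)^(-(1 + 1/p))` and `gᵖ = xᵖ / (1 + xᵖ)`.

The lower bound is `g + g^(1+p) / (p(1+p))`. Its derivative `(1 + gᵖ/p) g'` is below
`arctan_p' = 1 / (1 + xᵖ)` by Bernoulli's inequality `(1 + s)^(1+1/p) > 1 + (1 + 1/p) s`,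
and both functions vanish at `0`.

For the upper bound, `(arctan_p / g)' = (x - arctan_p x) g' / g² > 0` because the integrand is
below `1`; hence `arctan_p x / g x < arctan_p 1 / g 1 = 2^(1/p) b_p` for `x < 1`.
-/

/-- The second coordinate of `(1, x) / ‖(1, x)‖_p`; for `p = 2` it is `sin (arctan x)`. -/
noncomputable def lpSin (p x : ℝ) : ℝ := x / (1 + x ^ p) ^ (1 / p)

section

variable {p x : ℝ}

lemma one_add_rpow_pos (hx : 0 ≤ x) : 0 < 1 + x ^ p := by positivity

lemma continuousOn_inv_one_add_rpow (hp : 0 ≤ p) :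
    ContinuousOn (fun t : ℝ => (1 + t ^ p)⁻¹) (Ici 0) :=
  (continuous_const.add (continuous_rpow_const hp)).continuousOn.inv₀
    fun _ ht => (one_add_rpow_pos ht).ne'

lemma arctanp_zero : arctanp p 0 = 0 := intervalIntegral.integral_same

lemma continuousOn_arctanp (hp : 0 ≤ p) (b : ℝ) : ContinuousOn (arctanp p) (Icc 0 b) := by
  rcases le_total 0 b with hb | hb
  · have hint : MeasureTheory.IntegrableOn (fun t : ℝ => (1 + t ^ p)⁻¹) (uIcc 0 b) := by
      rw [uIcc_of_le hb]
      exact ((continuousOn_inv_one_add_rpow hp).mono Icc_subset_Ici_self).integrableOn_Icc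
    have := intervalIntegral.continuousOn_primitive_interval hint
    rwa [uIcc_of_le hb] at this
  · exact (subsingleton_Icc_of_ge hb).continuousOn _

lemma hasDerivAt_arctanp (hp : 0 ≤ p) (hx : 0 < x) :
    HasDerivAt (arctanp p) (1 + x ^ p)⁻¹ x := by
  have hcont := continuousOn_inv_one_add_rpow hp
  exact intervalIntegral.integral_hasDerivAt_right
    ((hcont.mono Icc_subset_Ici_self).intervalIntegrable_of_Icc hx.le)
    ((hcont.mono Ioi_subset_Ici_self).stronglyMeasurableAtFilter isOpen_Ioi x hx)
    (hcont.continuousAt (Ici_mem_nhds hx))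

lemma arctanp_lt_self (hp : 0 ≤ p) (hx : 0 < x) : arctanp p x < x := by
  have integrand_lt_one {t : ℝ} (ht : 0 < t) : (1 + t ^ p)⁻¹ < 1 :=
    inv_lt_one_of_one_lt₀ (lt_add_of_pos_right 1 (rpow_pos_of_pos ht p))
  simpa [arctanp] using intervalIntegral.integral_lt_integral_of_continuousOn_of_le_of_exists_lt
    hx ((continuousOn_inv_one_add_rpow hp).mono Icc_subset_Ici_self) continuousOn_const
    (fun t ht => (integrand_lt_one ht.1).le) ⟨x, ⟨hx.le, le_rfl⟩, integrand_lt_one hx⟩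

lemma lpSin_zero : lpSin p 0 = 0 := by simp [lpSin]

lemma lpSin_pos (hx : 0 < x) : 0 < lpSin p x := by unfold lpSin; positivity

lemma lpSin_nonneg (hx : 0 ≤ x) : 0 ≤ lpSin p x := by unfold lpSin; positivity

lemma lpSin_one : lpSin p 1 = (2 ^ (1 / p))⁻¹ := by
  norm_num [lpSin, one_add_one_eq_two]

lemma lpSin_eq_rpow (hp : p ≠ 0) (hx : 0 ≤ x) :
    lpSin p x = (x ^ p / (1 + x ^ p)) ^ (1 / p) := by
  rw [lpSin, div_rpow (by positivity) (one_add_rpow_pos hx).le, ← rpow_mul hx,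
    mul_one_div_cancel hp, rpow_one]

lemma lpSin_rpow (hp : p ≠ 0) (hx : 0 ≤ x) : lpSin p x ^ p = x ^ p / (1 + x ^ p) := by
  rw [lpSin_eq_rpow hp hx, ← rpow_mul (by positivity), one_div_mul_cancel hp, rpow_one]

lemma continuousOn_lpSin (hp : 0 ≤ p) : ContinuousOn (lpSin p) (Ici 0) := by
  have hbase : ContinuousOn (fun t : ℝ => 1 + t ^ p) (Ici 0) :=
    (continuous_const.add (continuous_rpow_const hp)).continuousOn
  exact continuousOn_id.div (hbase.rpow_const fun t ht => Or.inl (one_add_rpow_pos ht).ne')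
    fun t ht => (rpow_pos_of_pos (one_add_rpow_pos ht) _).ne'

lemma hasDerivAt_lpSin (hp : p ≠ 0) (hx : 0 < x) :
    HasDerivAt (lpSin p) ((1 + x ^ p) ^ (1 + 1 / p))⁻¹ x := by
  have hc := one_add_rpow_pos (p := p) hx.le
  have hbase : HasDerivAt (fun t : ℝ => 1 + t ^ p) (p * x ^ (p - 1)) x :=
    (hasDerivAt_rpow_const (Or.inl hx.ne')).const_add 1
  refine ((hasDerivAt_id x).div (hbase.rpow_const (p := 1 / p) (Or.inl hc.ne'))
    (rpow_pos_of_pos hc _).ne').congr_deriv ?_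
  rw [id_eq, rpow_sub_one hx.ne', rpow_sub_one hc.ne', rpow_add hc, rpow_one]
  have := rpow_pos_of_pos hc (1 / p)
  field_simp
  ring

lemma one_add_div_div_rpow_lt_inv {s : ℝ} (hp : 0 < p) (hs : 0 < s) :
    (1 + s / (1 + s) / p) / (1 + s) ^ (1 + 1 / p) < (1 + s)⁻¹ := by
  have bernoulli : 1 + (1 + 1 / p) * s < (1 + s) ^ (1 + 1 / p) :=
    one_add_mul_self_lt_rpow_one_add (by linarith) hs.ne' (lt_add_of_pos_right 1 (by positivity))
  have hnum : 1 + s / (1 + s) / p = (1 + s)⁻¹ * (1 + (1 + 1 / p) * s) := by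
    field_simp
    ring
  rw [div_lt_iff₀ (by positivity), hnum]
  exact mul_lt_mul_of_pos_left bernoulli (by positivity)

lemma hasDerivAt_lpSin_add_rpow (hp : 0 < p) (hx : 0 < x) :
    HasDerivAt (fun y => lpSin p y + lpSin p y ^ (1 + p) / (p * (1 + p)))
      ((1 + x ^ p / (1 + x ^ p) / p) / (1 + x ^ p) ^ (1 + 1 / p)) x := by
  have hg := hasDerivAt_lpSin hp.ne' hx
  refine (hg.add ((hg.rpow_const (p := 1 + p) (Or.inr (by linarith))).div_const _)).congr_deriv ?_
  rw [add_sub_cancel_left, lpSin_rpow hp.ne' hx.le]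
  field_simp

lemma lpSin_add_rpow_lt_arctanp (hp : 0 < p) (hx : 0 < x) :
    lpSin p x + lpSin p x ^ (1 + p) / (p * (1 + p)) < arctanp p x := by
  set L := fun y => lpSin p y + lpSin p y ^ (1 + p) / (p * (1 + p))
  have hL : ContinuousOn L (Icc 0 x) := by
    have hg := (continuousOn_lpSin hp.le).mono (Icc_subset_Ici_self : Icc 0 x ⊆ Ici 0)
    exact hg.add ((hg.rpow_const fun _ _ => Or.inr (by positivity)).div_const _)
  have hmono : StrictMonoOn (arctanp p - L) (Icc 0 x) := by
    refine strictMonoOn_of_deriv_pos (convex_Icc 0 x)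
      ((continuousOn_arctanp hp.le x).sub hL) fun y hy => ?_
    rw [interior_Icc] at hy
    have hderiv := (hasDerivAt_arctanp hp.le hy.1).sub (hasDerivAt_lpSin_add_rpow hp hy.1)
    rw [hderiv.deriv, sub_pos]
    exact one_add_div_div_rpow_lt_inv hp (rpow_pos_of_pos hy.1 p)
  have := hmono (left_mem_Icc.2 hx.le) (right_mem_Icc.2 hx.le) hx
  simpa [L, arctanp_zero, lpSin_zero, zero_rpow (by positivity : 1 + p ≠ 0)] using this

lemma lpSin_add_rpow_eq (hp : 0 < p) (hx : 0 ≤ x) :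
    lpSin p x + lpSin p x ^ (1 + p) / (p * (1 + p))
      = (p * (1 + p) * (1 + x ^ p) + x ^ p) * x / (p * (1 + p) * (1 + x ^ p) ^ (1 + 1 / p)) := by
  have hc := one_add_rpow_pos (p := p) hx
  rw [rpow_add' (lpSin_nonneg hx) (by linarith), rpow_one, lpSin_rpow hp.ne' hx, lpSin,
    rpow_add hc, rpow_one]
  have := rpow_pos_of_pos hc (1 / p)
  field_simp

lemma strictMonoOn_arctanp_div_lpSin (hp : 0 < p) :
    StrictMonoOn (fun y => arctanp p y / lpSin p y) (Ioi 0) := by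
  have hderiv : ∀ y ∈ Ioi (0 : ℝ), HasDerivAt (fun y => arctanp p y / lpSin p y)
      ((y - arctanp p y) / (1 + y ^ p) ^ (1 + 1 / p) / lpSin p y ^ 2) y := by
    intro y hy
    refine ((hasDerivAt_arctanp hp.le hy).div (hasDerivAt_lpSin hp.ne' hy)
      (lpSin_pos hy).ne').congr_deriv ?_
    have hc := one_add_rpow_pos (p := p) (le_of_lt hy)
    rw [lpSin, rpow_add hc, rpow_one]
    have := rpow_pos_of_pos hc (1 / p)
    field_simp
  refine strictMonoOn_of_deriv_pos (convex_Ioi 0)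
    (fun y hy => (hderiv y hy).continuousAt.continuousWithinAt) fun y hy => ?_
  rw [interior_Ioi] at hy
  rw [(hderiv y hy).deriv]
  exact div_pos (div_pos (sub_pos.2 (arctanp_lt_self hp.le hy))
    (rpow_pos_of_pos (one_add_rpow_pos (le_of_lt hy)) _))
    (pow_pos (lpSin_pos hy) 2)

end

theorem arctanp_bounds (p x : ℝ) (hp : 1 < p) (hx : x ∈ Set.Ioo (0:ℝ) 1) :
    (p * (1 + p) * (1 + x ^ p) + x ^ p) * x / (p * (1 + p) * (1 + x ^ p) ^ (1 + 1 / p))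
        < arctanp p x ∧
      arctanp p x < (2:ℝ) ^ (1 / p) * bp p * (x ^ p / (1 + x ^ p)) ^ (1 / p) := by
  obtain ⟨hx0, hx1⟩ := hx
  have hp0 : 0 < p := zero_lt_one.trans hp
  constructor
  · rw [← lpSin_add_rpow_eq hp0 hx0.le]
    exact lpSin_add_rpow_lt_arctanp hp0 hx0
  · have hratio := strictMonoOn_arctanp_div_lpSin hp0 hx0 (mem_Ioi.2 one_pos) hx1
    dsimp only at hratio
    rw [lpSin_one, div_inv_eq_mul, div_lt_iff₀ (lpSin_pos hx0)] at hratio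
    rw [← lpSin_eq_rpow hp0.ne' hx0.le, bp]
    linarith
end

section
/- For every p > 1 and every x ∈ (0,1), setting z = (x^p/(1+x^p))^(1/p), the following two-sided bound holds: z·(1 + log(1+x^p)/(1+p)) < arsinh_p(x) < z·(1 + (1/p)·log(1+x^p)). -/
open Real Set MeasureTheory

/-!
With `z = x (1 + xᵖ)^(-1/p)`, both bounds have the shape
`F_c(x) = z (1 + c log (1 + xᵖ))` (here `arsinhpComparison p c x`), with `c = 1/(1+p)` below and
`c = 1/p` above. Since `F_c(0) = arsinh_p(0) = 0`, it suffices to compare derivatives on `(0, x)`.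
Writing `u = yᵖ`, one has `F_c'(y) = (1+u)^(-1/p-1) (1 + c log (1+u) + c p u)` and
`arsinh_p'(y) = (1+u)^(-1/p-1) (1+u)`, so the comparison reduces to `c (log (1 + u) + p u) ≶ u`,
i.e. to `0 < log (1 + u) < u`.
-/

noncomputable def arsinhp (p x : ℝ) : ℝ := ∫ t in (0:ℝ)..x, (1 + t ^ p) ^ (-1 / p)

theorem lt_of_hasDerivAt_lt_of_eq {f g f' g' : ℝ → ℝ} {a b : ℝ} (hab : a < b)
    (hf : ContinuousOn f (Icc a b)) (hg : ContinuousOn g (Icc a b))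
    (hf' : ∀ y ∈ Ioo a b, HasDerivAt f (f' y) y) (hg' : ∀ y ∈ Ioo a b, HasDerivAt g (g' y) y)
    (hlt : ∀ y ∈ Ioo a b, f' y < g' y) (ha : f a = g a) : f b < g b := by
  have hmono : StrictMonoOn (g - f) (Icc a b) := by
    refine strictMonoOn_of_hasDerivWithinAt_pos (convex_Icc a b) (hg.sub hf) (f' := g' - f')
      (fun y hy => ?_) (fun y hy => ?_) <;> rw [interior_Icc] at hy
    · exact ((hg' y hy).sub (hf' y hy)).hasDerivWithinAt
    · exact sub_pos.mpr (hlt y hy)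
  simpa only [Pi.sub_apply, ha, sub_self, sub_pos] using
    hmono (left_mem_Icc.mpr hab.le) (right_mem_Icc.mpr hab.le) hab

section

variable {p : ℝ}

theorem continuousAt_one_add_rpow_rpow (hp : 0 ≤ p) (q : ℝ) {t : ℝ} (ht : 0 ≤ t) :
    ContinuousAt (fun t : ℝ => (1 + t ^ p) ^ q) t :=
  (continuousAt_const.add (continuousAt_rpow_const t p (Or.inr hp))).rpow_const
    (Or.inl (add_pos_of_pos_of_nonneg one_pos (rpow_nonneg ht p)).ne')

theorem arsinhp_zero : arsinhp p 0 = 0 :=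
  intervalIntegral.integral_same

theorem continuousOn_arsinhp (hp : 0 ≤ p) {x : ℝ} (hx : 0 ≤ x) :
    ContinuousOn (arsinhp p) (Icc 0 x) := by
  have hI : IntegrableOn (fun t : ℝ => (1 + t ^ p) ^ (-1 / p)) (uIcc 0 x) := by
    rw [uIcc_of_le hx]
    exact ContinuousOn.integrableOn_Icc fun t ht =>
      (continuousAt_one_add_rpow_rpow hp _ ht.1).continuousWithinAt
  have := intervalIntegral.continuousOn_primitive_interval hI
  rwa [uIcc_of_le hx] at this

theorem hasDerivAt_arsinhp (hp : 0 ≤ p) {y : ℝ} (hy : 0 < y) :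
    HasDerivAt (arsinhp p) ((1 + y ^ p) ^ (-1 / p)) y := by
  have hcont : ContinuousOn (fun t : ℝ => (1 + t ^ p) ^ (-1 / p)) (Ici 0) := fun t ht =>
    (continuousAt_one_add_rpow_rpow hp _ ht).continuousWithinAt
  refine intervalIntegral.integral_hasDerivAt_right ?_ ?_
    (continuousAt_one_add_rpow_rpow hp _ hy.le)
  · exact (hcont.mono (by simp [uIcc_of_le hy.le, Icc_subset_Ici_self])).intervalIntegrable
  · exact (hcont.mono Ioi_subset_Ici_self).stronglyMeasurableAtFilter isOpen_Ioi y hy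

theorem one_add_rpow_rpow_eq_mul {y : ℝ} (hy : 0 ≤ y) :
    (1 + y ^ p) ^ (-1 / p) = (1 + y ^ p) ^ (-1 / p - 1) * (1 + y ^ p) := by
  rw [← rpow_add_one (add_pos_of_pos_of_nonneg one_pos (rpow_nonneg hy p)).ne', sub_add_cancel]

noncomputable def arsinhpComparison (p c y : ℝ) : ℝ :=
  y * (1 + y ^ p) ^ (-1 / p) * (1 + c * log (1 + y ^ p))

theorem arsinhpComparison_zero (c : ℝ) : arsinhpComparison p c 0 = 0 := by
  simp [arsinhpComparison]

theorem continuousOn_arsinhpComparison (hp : 0 ≤ p) (c : ℝ) :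
    ContinuousOn (arsinhpComparison p c) (Ici 0) := fun t ht =>
  have hne : (1 : ℝ) + t ^ p ≠ 0 := (add_pos_of_pos_of_nonneg one_pos (rpow_nonneg ht p)).ne'
  have hbase := continuousAt_const.add (continuousAt_rpow_const t p (Or.inr hp))
  ((continuousAt_id.mul (continuousAt_one_add_rpow_rpow hp _ ht)).mul
    (((hbase.log hne).const_mul c).const_add 1)).continuousWithinAt

theorem hasDerivAt_arsinhpComparison (hp : p ≠ 0) (c : ℝ) {y : ℝ} (hy : 0 < y) :
    HasDerivAt (arsinhpComparison p c)
      ((1 + y ^ p) ^ (-1 / p - 1) * (1 + c * log (1 + y ^ p) + c * p * y ^ p)) y := by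
  have hu : 0 < 1 + y ^ p := by linarith [rpow_pos_of_pos hy p]
  have hbase : HasDerivAt (fun y : ℝ => 1 + y ^ p) (p * y ^ (p - 1)) y :=
    (hasDerivAt_rpow_const (Or.inl hy.ne')).const_add 1
  refine (((hasDerivAt_id' y).mul (hbase.rpow_const (p := -1 / p) (Or.inl hu.ne'))).mul
    ((hbase.log hu.ne').const_mul c |>.const_add 1)).congr_deriv ?_
  simp only [Pi.mul_apply]
  rw [one_add_rpow_rpow_eq_mul hy.le, rpow_sub_one hy.ne']
  field_simp
  ring

theorem arsinhpComparison_lt_arsinhp (hp : 0 < p) {c x : ℝ} (hx : 0 < x)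
    (hc : ∀ u > 0, c * (log (1 + u) + p * u) < u) :
    arsinhpComparison p c x < arsinhp p x := by
  refine lt_of_hasDerivAt_lt_of_eq hx
    ((continuousOn_arsinhpComparison hp.le c).mono Icc_subset_Ici_self)
    (continuousOn_arsinhp hp.le hx.le)
    (fun y hy => hasDerivAt_arsinhpComparison hp.ne' c hy.1)
    (fun y hy => hasDerivAt_arsinhp hp.le hy.1) (fun y hy => ?_)
    (by rw [arsinhpComparison_zero, arsinhp_zero])
  have hyp := rpow_pos_of_pos hy.1 p
  rw [one_add_rpow_rpow_eq_mul hy.1.le]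
  exact mul_lt_mul_of_pos_left (by linarith [hc _ hyp]) (rpow_pos_of_pos (by linarith) _)

theorem arsinhp_lt_arsinhpComparison (hp : 0 < p) {c x : ℝ} (hx : 0 < x)
    (hc : ∀ u > 0, u < c * (log (1 + u) + p * u)) :
    arsinhp p x < arsinhpComparison p c x := by
  refine lt_of_hasDerivAt_lt_of_eq hx (continuousOn_arsinhp hp.le hx.le)
    ((continuousOn_arsinhpComparison hp.le c).mono Icc_subset_Ici_self)
    (fun y hy => hasDerivAt_arsinhp hp.le hy.1)
    (fun y hy => hasDerivAt_arsinhpComparison hp.ne' c hy.1) (fun y hy => ?_)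
    (by rw [arsinhpComparison_zero, arsinhp_zero])
  have hyp := rpow_pos_of_pos hy.1 p
  rw [one_add_rpow_rpow_eq_mul hy.1.le]
  exact mul_lt_mul_of_pos_left (by linarith [hc _ hyp]) (rpow_pos_of_pos (by linarith) _)

theorem div_one_add_rpow_rpow_one_div (hp : p ≠ 0) {x : ℝ} (hx : 0 ≤ x) :
    (x ^ p / (1 + x ^ p)) ^ (1 / p) = x * (1 + x ^ p) ^ (-1 / p) := by
  have hu : 0 ≤ 1 + x ^ p := by linarith [rpow_nonneg hx p]
  rw [div_rpow (rpow_nonneg hx p) hu, one_div, rpow_rpow_inv hx hp, div_eq_mul_inv,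
    ← rpow_neg hu, neg_div, one_div]

end

theorem arsinhp_bounds (p x : ℝ) (hp : 1 < p) (hx : x ∈ Set.Ioo (0:ℝ) 1) :
    (x ^ p / (1 + x ^ p)) ^ (1 / p) * (1 + Real.log (1 + x ^ p) / (1 + p)) < arsinhp p x ∧
      arsinhp p x < (x ^ p / (1 + x ^ p)) ^ (1 / p) * (1 + (1 / p) * Real.log (1 + x ^ p)) := by
  obtain ⟨hx0, -⟩ := hx
  have hp0 : 0 < p := by linarith
  rw [div_one_add_rpow_rpow_one_div hp0.ne' hx0.le, div_eq_inv_mul (log _)]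
  refine ⟨arsinhpComparison_lt_arsinhp hp0 hx0 fun u hu => ?_,
    arsinhp_lt_arsinhpComparison hp0 hx0 fun u hu => ?_⟩
  · rw [inv_mul_lt_iff₀ (by linarith)]
    linarith [log_lt_sub_one_of_pos (by linarith : 0 < 1 + u) (by linarith : 1 + u ≠ 1)]
  · have := mul_pos (one_div_pos.mpr hp0) (log_pos (by linarith : 1 < 1 + u))
    rw [mul_add, ← mul_assoc, one_div_mul_cancel hp0.ne', one_mul]
    linarith
end

section
/- For every p > 1 and every x ∈ (0,1), the following two-sided bound holds: x·(1 − log(1−x^p)/(1+p)) < artanh_p(x) < x·(1 − (1/p)·log(1−x^p)). -/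
/-!
Both bounds compare the integrand `(1 - tᵖ)⁻¹ = 1 + u / (1 - u)`, `u = tᵖ`, with the derivative
`1 - c log (1 - u) + c p u / (1 - u)` of `t ↦ t (1 - c log (1 - tᵖ))`. For `c = 1 / p` the difference
is `-log (1 - u) / p > 0`; for `c = 1 / (1 + p)` it is `(u / (1 - u) + log (1 - u)) / (1 + p) > 0`,
by `log y < y - 1` at `y = (1 - u)⁻¹`. Integrating over `[0, x]` gives the two strict bounds.
-/

open Real

/-- The generalized inverse hyperbolic tangent: `artanh_p x = ∫₀ˣ (1 - tᵖ)⁻¹ dt`. -/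
noncomputable def artanhp (p x : ℝ) : ℝ := ∫ t in (0:ℝ)..x, (1 - t ^ p)⁻¹

open Set intervalIntegral

lemma neg_log_one_sub_lt_div_one_sub {u : ℝ} (hu0 : 0 < u) (hu1 : u < 1) :
    -log (1 - u) < u / (1 - u) := by
  have h1u : 0 < 1 - u := sub_pos.2 hu1
  have h := log_lt_sub_one_of_pos (inv_pos.2 h1u) (inv_ne_one.2 (by linarith))
  rw [log_inv] at h
  calc -log (1 - u) < (1 - u)⁻¹ - 1 := h
    _ = u / (1 - u) := by field_simp; ring

lemma inv_one_sub_lt_one_div_coeff {p u : ℝ} (hp : 0 < p) (hu0 : 0 < u) (hu1 : u < 1) :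
    (1 - u)⁻¹ < 1 - 1 / p * log (1 - u) + 1 / p * p * (u / (1 - u)) := by
  have h1u : 0 < 1 - u := sub_pos.2 hu1
  have hlog : log (1 - u) < 0 := log_neg h1u (by linarith)
  have hinv : (1 - u)⁻¹ = 1 + u / (1 - u) := by field_simp; ring
  rw [hinv, one_div_mul_cancel hp.ne', one_mul]
  have : 0 < 1 / p * -log (1 - u) := mul_pos (one_div_pos.2 hp) (neg_pos.2 hlog)
  linarith

lemma inv_one_add_coeff_lt_inv_one_sub {p u : ℝ} (hp : 0 < 1 + p) (hu0 : 0 < u) (hu1 : u < 1) :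
    1 - (1 + p)⁻¹ * log (1 - u) + (1 + p)⁻¹ * p * (u / (1 - u)) < (1 - u)⁻¹ := by
  have h1u : 0 < 1 - u := sub_pos.2 hu1
  have hinv : (1 - u)⁻¹ = 1 + u / (1 - u) := by field_simp; ring
  have hdiff : (1 - u)⁻¹ - (1 - (1 + p)⁻¹ * log (1 - u) + (1 + p)⁻¹ * p * (u / (1 - u)))
      = (1 + p)⁻¹ * (u / (1 - u) + log (1 - u)) := by
    rw [hinv]; field_simp; ring
  have := mul_pos (inv_pos.2 hp) (neg_lt_iff_pos_add.1 (neg_log_one_sub_lt_div_one_sub hu0 hu1))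
  linarith

section

variable {p : ℝ}

lemma one_sub_rpow_pos (hp : 0 < p) {t : ℝ} (ht : t ∈ Ico (0:ℝ) 1) : 0 < 1 - t ^ p :=
  sub_pos.2 (rpow_lt_one ht.1 ht.2 hp)

lemma continuousOn_inv_one_sub_rpow (hp : 0 < p) :
    ContinuousOn (fun t : ℝ => (1 - t ^ p)⁻¹) (Ico 0 1) :=
  (continuousOn_const.sub (continuousOn_id.rpow_const fun _ _ => Or.inr hp.le)).inv₀
    fun _ ht => (one_sub_rpow_pos hp ht).ne'

lemma continuousOn_one_sub_mul_log_add (hp : 0 < p) (c : ℝ) :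
    ContinuousOn (fun t : ℝ => 1 - c * log (1 - t ^ p) + c * p * (t ^ p / (1 - t ^ p)))
      (Ico 0 1) := by
  have hpow : ContinuousOn (fun t : ℝ => t ^ p) (Ico 0 1) :=
    continuousOn_id.rpow_const fun _ _ => Or.inr hp.le
  have hne : ∀ t ∈ Ico (0:ℝ) 1, 1 - t ^ p ≠ 0 := fun _ ht => (one_sub_rpow_pos hp ht).ne'
  exact (continuousOn_const.sub (continuousOn_const.mul ((continuousOn_const.sub hpow).log hne))).add
    (continuousOn_const.mul (hpow.div (continuousOn_const.sub hpow) hne))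

lemma hasDerivAt_mul_one_sub_mul_log (hp : 1 ≤ p) (c : ℝ) {t : ℝ} (ht : t ∈ Ico (0:ℝ) 1) :
    HasDerivAt (fun y : ℝ => y * (1 - c * log (1 - y ^ p)))
      (1 - c * log (1 - t ^ p) + c * p * (t ^ p / (1 - t ^ p))) t := by
  have hne : 1 - t ^ p ≠ 0 := (one_sub_rpow_pos (by linarith) ht).ne'
  have hlog : HasDerivAt (fun y : ℝ => log (1 - y ^ p)) (-(p * t ^ (p - 1)) / (1 - t ^ p)) t :=
    ((hasDerivAt_rpow_const (Or.inr hp)).const_sub 1).log hne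
  have hpow : t * t ^ (p - 1) = t ^ p := by
    rw [← rpow_one_add' ht.1 (by linarith)]; ring_nf
  refine ((hasDerivAt_id t).mul ((hlog.const_mul c).const_sub 1)).congr_deriv ?_
  rw [← hpow]; simp only [id]; field_simp

lemma integral_one_sub_mul_log_add (hp : 1 ≤ p) (c : ℝ) {x : ℝ} (hx : x ∈ Ico (0:ℝ) 1) :
    ∫ t in (0:ℝ)..x, (1 - c * log (1 - t ^ p) + c * p * (t ^ p / (1 - t ^ p)))
      = x * (1 - c * log (1 - x ^ p)) := by
  have hsub : uIcc 0 x ⊆ Ico (0:ℝ) 1 := by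
    rw [uIcc_of_le hx.1]; exact Icc_subset_Ico_right hx.2
  rw [integral_eq_sub_of_hasDerivAt
    (fun t ht => hasDerivAt_mul_one_sub_mul_log hp c (hsub ht))
    ((continuousOn_one_sub_mul_log_add (by linarith) c).mono hsub).intervalIntegrable]
  simp

end

theorem artanhp_bounds (p x : ℝ) (hp : 1 < p) (hx : x ∈ Set.Ioo (0:ℝ) 1) :
    x * (1 - Real.log (1 - x ^ p) / (1 + p)) < artanhp p x ∧
      artanhp p x < x * (1 - (1 / p) * Real.log (1 - x ^ p)) := by
  obtain ⟨hx0, hx1⟩ := hx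
  have hp0 : 0 < p := by linarith
  have hsub : Icc 0 x ⊆ Ico (0:ℝ) 1 := Icc_subset_Ico_right hx1
  have hpow : ∀ t ∈ Icc 0 x, 0 < t → 0 < t ^ p ∧ t ^ p < 1 := fun t ht ht0 =>
    ⟨rpow_pos_of_pos ht0 p, rpow_lt_one ht.1 (ht.2.trans_lt hx1) hp0⟩
  have hmem : x ∈ Icc 0 x := right_mem_Icc.2 hx0.le
  have hf := (continuousOn_inv_one_sub_rpow hp0).mono hsub
  have hg := fun c => (continuousOn_one_sub_mul_log_add hp0 c).mono hsub
  unfold artanhp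
  rw [div_eq_inv_mul, ← integral_one_sub_mul_log_add hp.le _ ⟨hx0.le, hx1⟩,
    ← integral_one_sub_mul_log_add hp.le _ ⟨hx0.le, hx1⟩]
  constructor
  · refine integral_lt_integral_of_continuousOn_of_le_of_exists_lt hx0 (hg _) hf
      (fun t ht => ?_) ⟨x, hmem, ?_⟩
    · obtain ⟨hu0, hu1⟩ := hpow t (Ioc_subset_Icc_self ht) ht.1
      exact (inv_one_add_coeff_lt_inv_one_sub (by linarith) hu0 hu1).le
    · obtain ⟨hu0, hu1⟩ := hpow x hmem hx0
      exact inv_one_add_coeff_lt_inv_one_sub (by linarith) hu0 hu1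
  · refine integral_lt_integral_of_continuousOn_of_le_of_exists_lt hx0 hf (hg _)
      (fun t ht => ?_) ⟨x, hmem, ?_⟩
    · obtain ⟨hu0, hu1⟩ := hpow t (Ioc_subset_Icc_self ht) ht.1
      exact (inv_one_sub_lt_one_div_coeff hp0 hu0 hu1).le
    · obtain ⟨hu0, hu1⟩ := hpow x hmem hx0
      exact inv_one_sub_lt_one_div_coeff hp0 hu0 hu1
end

section
/- For every p > 1 and every x ∈ (0,1), the functions k ↦ (arcsin_p(x^k))^(1/k) and k ↦ (artanh_p(x^k))^(1/k) are decreasing in k on (0,∞); that is, for all 0 < k₁ < k₂ one has (arcsin_p(x^(k₂)))^(1/k₂) ≤ (arcsin_p(x^(k₁)))^(1/k₁) and (artanh_p(x^(k₂)))^(1/k₂) ≤ (artanh_p(x^(k₁)))^(1/k₁). -/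
open Real

/-!
Let `F` be the primitive, vanishing at `0`, of a density `f ≥ 1` that is increasing on `[0, 1)`.
For `μ ≥ 1` the function `y ↦ F y ^ μ - F (y ^ μ)` vanishes at `0` and has derivative
`μ (f y · F y ^ (μ - 1) - f (y ^ μ) · y ^ (μ - 1)) ≥ 0`, since `y ^ μ ≤ y ≤ F y`. Hence
`F (x ^ μ) ≤ F x ^ μ`; applied to the base `x ^ k₁` with `μ = k₂ / k₁` this gives
`F (x ^ k₂) ^ (1 / k₂) ≤ F (x ^ k₁) ^ (1 / k₁)`. Both `(1 - tᵖ) ^ (-1 / p)` and `(1 - tᵖ)⁻¹` are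
such densities.
-/

open Set MeasureTheory

section

variable {F f : ℝ → ℝ}

theorem apply_rpow_le_rpow_apply {x μ : ℝ} (hFc : ContinuousOn F (Icc 0 x)) (hF_zero : F 0 = 0)
    (hF : ∀ y ∈ Ioo 0 1, HasDerivAt F (f y) y) (hf : MonotoneOn f (Ioo 0 1))
    (hf₀ : ∀ y ∈ Ioo 0 1, 0 ≤ f y) (hid : ∀ y ∈ Ioo 0 1, y ≤ F y)
    (hx₀ : 0 < x) (hx₁ : x < 1) (hμ : 1 ≤ μ) :
    F (x ^ μ) ≤ F x ^ μ := by
  have hμ₀ : 0 < μ := zero_lt_one.trans_le hμ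
  have hpow_mem : ∀ y ∈ Icc 0 x, y ^ μ ∈ Icc 0 x := fun y hy =>
    ⟨rpow_nonneg hy.1 μ, (rpow_le_self_of_le_one hy.1 (hy.2.trans hx₁.le) hμ).trans hy.2⟩
  have hcont : ContinuousOn (fun y => F y ^ μ - F (y ^ μ)) (Icc 0 x) :=
    (hFc.rpow_const fun _ _ => Or.inr hμ₀.le).sub <|
      hFc.comp (continuous_rpow_const hμ₀.le).continuousOn hpow_mem
  have hderiv : ∀ y ∈ Ioo 0 x, HasDerivAt (fun y => F y ^ μ - F (y ^ μ))
      (f y * μ * F y ^ (μ - 1) - f (y ^ μ) * (μ * y ^ (μ - 1))) y := by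
    intro y ⟨hy₀, hyx⟩
    have hy₁ : y < 1 := hyx.trans hx₁
    have hyμ : y ^ μ ∈ Ioo 0 1 := ⟨rpow_pos_of_pos hy₀ μ, rpow_lt_one hy₀.le hy₁ hμ₀⟩
    exact ((hF y ⟨hy₀, hy₁⟩).rpow_const (Or.inr hμ)).sub
      ((hF _ hyμ).comp y (hasDerivAt_rpow_const (Or.inr hμ)))
  have hderiv_nonneg : ∀ y ∈ Ioo 0 x,
      0 ≤ f y * μ * F y ^ (μ - 1) - f (y ^ μ) * (μ * y ^ (μ - 1)) := by
    intro y ⟨hy₀, hyx⟩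
    have hy : y ∈ Ioo 0 1 := ⟨hy₀, hyx.trans hx₁⟩
    have hyμ : y ^ μ ∈ Ioo 0 1 := ⟨rpow_pos_of_pos hy₀ μ, rpow_lt_one hy₀.le hy.2 hμ₀⟩
    have hfle : f (y ^ μ) ≤ f y := hf hyμ hy (rpow_le_self_of_le_one hy₀.le hy.2.le hμ)
    have hpowle : y ^ (μ - 1) ≤ F y ^ (μ - 1) := rpow_le_rpow hy₀.le (hid y hy) (by linarith)
    rw [sub_nonneg, mul_assoc]
    exact mul_le_mul hfle (by gcongr) (by positivity) (hf₀ y hy)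
  have hmono := monotoneOn_of_hasDerivWithinAt_nonneg (convex_Icc 0 x) hcont
    (by simpa only [interior_Icc] using fun y hy => (hderiv y hy).hasDerivWithinAt)
    (by simpa only [interior_Icc] using hderiv_nonneg)
    (left_mem_Icc.2 hx₀.le) (right_mem_Icc.2 hx₀.le) hx₀.le
  simpa [hF_zero, zero_rpow hμ₀.ne'] using hmono

theorem antitoneOn_apply_rpow_rpow_one_div
    (hF : ∀ y ∈ Ioo 0 1, ∀ μ : ℝ, 1 ≤ μ → F (y ^ μ) ≤ F y ^ μ) (hF₀ : ∀ y ∈ Ioo 0 1, 0 ≤ F y)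
    {x : ℝ} (hx : x ∈ Ioo 0 1) :
    AntitoneOn (fun k : ℝ => F (x ^ k) ^ (1 / k)) (Ioi 0) := by
  intro k₁ (hk₁ : 0 < k₁) k₂ (hk₂ : 0 < k₂) hk
  have hxk : ∀ k ∈ Ioi (0 : ℝ), x ^ k ∈ Ioo 0 1 := fun k hk =>
    ⟨rpow_pos_of_pos hx.1 k, rpow_lt_one hx.1.le hx.2 hk⟩
  have hpow : x ^ k₂ = (x ^ k₁) ^ (k₂ / k₁) := by
    rw [← rpow_mul hx.1.le, mul_div_cancel₀ _ (ne_of_gt hk₁)]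
  calc F (x ^ k₂) ^ (1 / k₂)
      ≤ (F (x ^ k₁) ^ (k₂ / k₁)) ^ (1 / k₂) := by
        have hle := hF _ (hxk k₁ hk₁) _ ((one_le_div₀ hk₁).2 hk)
        rw [← hpow] at hle
        exact rpow_le_rpow (hF₀ _ (hxk k₂ hk₂)) hle (by positivity)
    _ = F (x ^ k₁) ^ (1 / k₁) := by
        rw [← rpow_mul (hF₀ _ (hxk k₁ hk₁))]
        field_simp

theorem antitoneOn_integral_rpow_rpow_one_div (hc : ContinuousOn f (Ico 0 1))
    (hm : MonotoneOn f (Ico 0 1)) (h1 : ∀ t ∈ Ico 0 1, 1 ≤ f t) {x : ℝ} (hx : x ∈ Ioo 0 1) :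
    AntitoneOn (fun k : ℝ => (∫ t in (0 : ℝ)..x ^ k, f t) ^ (1 / k)) (Ioi 0) := by
  have hint : ∀ y ∈ Ico (0 : ℝ) 1, IntervalIntegrable f volume 0 y := fun y hy =>
    (hc.mono (Icc_subset_Ico_right hy.2)).intervalIntegrable_of_Icc hy.1
  have hid : ∀ y ∈ Ico (0 : ℝ) 1, y ≤ ∫ t in (0 : ℝ)..y, f t := fun y hy => by
    simpa using intervalIntegral.integral_mono_on hy.1 intervalIntegrable_const (hint y hy)
      fun t ht => h1 t ⟨ht.1, ht.2.trans_lt hy.2⟩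
  refine antitoneOn_apply_rpow_rpow_one_div (fun y hy μ hμ => ?_)
    (fun y hy => hy.1.le.trans (hid y (Ioo_subset_Ico_self hy))) hx
  refine apply_rpow_le_rpow_apply ?_ intervalIntegral.integral_same (fun z hz => ?_)
    (hm.mono Ioo_subset_Ico_self) (fun z hz => zero_le_one.trans (h1 z (Ioo_subset_Ico_self hz)))
    (fun z hz => hid z (Ioo_subset_Ico_self hz)) hy.1 hy.2 hμ
  · simpa only [uIcc_of_le hy.1.le] using
      intervalIntegral.continuousOn_primitive_interval' (hint y (Ioo_subset_Ico_self hy))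
        left_mem_uIcc
  · exact intervalIntegral.integral_hasDerivAt_right (hint z (Ioo_subset_Ico_self hz))
      ((hc.mono Ioo_subset_Ico_self).stronglyMeasurableAtFilter isOpen_Ioo z hz)
      (hc.continuousAt (Ico_mem_nhds hz.1 hz.2))

end

theorem one_sub_rpow_mem_Ioc {p t : ℝ} (hp : 0 < p) (ht : t ∈ Ico 0 1) : 1 - t ^ p ∈ Ioc 0 1 :=
  ⟨sub_pos.2 (rpow_lt_one ht.1 ht.2 hp), sub_le_self 1 (rpow_nonneg ht.1 p)⟩

theorem antitoneOn_integral_comp_one_sub_rpow {φ : ℝ → ℝ} {p x : ℝ} (hp : 0 < p)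
    (hc : ContinuousOn φ (Ioc 0 1)) (hφ : AntitoneOn φ (Ioc 0 1)) (h1 : ∀ s ∈ Ioc 0 1, 1 ≤ φ s)
    (hx : x ∈ Ioo 0 1) :
    AntitoneOn (fun k : ℝ => (∫ t in (0 : ℝ)..x ^ k, φ (1 - t ^ p)) ^ (1 / k)) (Ioi 0) := by
  refine antitoneOn_integral_rpow_rpow_one_div ?_ (fun a ha b hb hab => ?_)
    (fun t ht => h1 _ (one_sub_rpow_mem_Ioc hp ht)) hx
  · refine hc.comp (fun t ht => ?_) (fun t ht => one_sub_rpow_mem_Ioc hp ht)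
    exact (continuousAt_const.sub (continuousAt_rpow_const t p (Or.inr hp.le))).continuousWithinAt
  · exact hφ (one_sub_rpow_mem_Ioc hp hb) (one_sub_rpow_mem_Ioc hp ha)
      (sub_le_sub_left (rpow_le_rpow ha.1 hab hp.le) 1)

theorem arcsinp_artanhp_rpow_decreasing (p x : ℝ) (hp : 1 < p)
    (hx : x ∈ Set.Ioo (0:ℝ) 1) (k₁ k₂ : ℝ) (hk₁ : 0 < k₁) (hk : k₁ < k₂) :
    (arcsinp p (x ^ k₂)) ^ (1 / k₂) ≤ (arcsinp p (x ^ k₁)) ^ (1 / k₁) ∧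
      (artanhp p (x ^ k₂)) ^ (1 / k₂) ≤ (artanhp p (x ^ k₁)) ^ (1 / k₁) := by
  have hp₀ : 0 < p := zero_lt_one.trans hp
  have hexp : -1 / p ≤ 0 := div_nonpos_of_nonpos_of_nonneg (by norm_num) hp₀.le
  have harcsinp := antitoneOn_integral_comp_one_sub_rpow (φ := fun s => s ^ (-1 / p)) hp₀
    (continuousOn_id.rpow_const fun s hs => Or.inl hs.1.ne')
    (fun a ha b _ hab => rpow_le_rpow_of_nonpos ha.1 hab hexp)
    (fun s hs => one_le_rpow_of_pos_of_le_one_of_nonpos hs.1 hs.2 hexp) hx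
  have hartanhp := antitoneOn_integral_comp_one_sub_rpow (φ := fun s => s⁻¹) hp₀
    (continuousOn_inv₀.mono fun s hs => hs.1.ne')
    (fun a ha b _ hab => inv_anti₀ ha.1 hab)
    (fun s hs => (one_le_inv₀ hs.1).2 hs.2) hx
  have hk₂ : k₂ ∈ Ioi 0 := hk₁.trans hk
  exact ⟨harcsinp hk₁ hk₂ hk.le, hartanhp hk₁ hk₂ hk.le⟩
end

section
/- For every p > 1 and every x ∈ (0,1), the functions k ↦ (arctan_p(x^k))^(1/k) and k ↦ (arsinh_p(x^k))^(1/k) are increasing in k on (0,∞); that is, for all 0 < k₁ < k₂ one has (arctan_p(x^(k₁)))^(1/k₁) ≤ (arctan_p(x^(k₂)))^(1/k₂) and (arsinh_p(x^(k₁)))^(1/k₁) ≤ (arsinh_p(x^(k₂)))^(1/k₂). -/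
/-!
With `F(y) = ∫₀ʸ g`, where the integrand `g` is antitone on `[0,1]` with values in `[0,1]`, the
substitution `t = y s` gives `F(y) = y φ(y)` with `φ(y) = ∫₀¹ g(y s) ds`; thus `φ` is antitone with
values in `[0,1]` and `F(x^k)^(1/k) = x φ(x^k)^(1/k)`. As `k` grows, `x^k` decreases, so
`φ(x^k) ∈ [0,1]` grows, and so does its power with the decreasing exponent `1/k`.
-/

open Real

open Set

lemma rpow_one_div_mul_rpow_le_of_antitoneOn {φ : ℝ → ℝ} (hφ : AntitoneOn φ (Icc 0 1))
    (hφI : MapsTo φ (Icc 0 1) (Icc 0 1)) {x k₁ k₂ : ℝ} (hx : x ∈ Icc (0:ℝ) 1) (hk₁ : 0 < k₁)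
    (hk : k₁ ≤ k₂) :
    (x ^ k₁ * φ (x ^ k₁)) ^ (1 / k₁) ≤ (x ^ k₂ * φ (x ^ k₂)) ^ (1 / k₂) := by
  have hk₂ : 0 < k₂ := hk₁.trans_le hk
  have hmem : ∀ k : ℝ, 0 < k → x ^ k ∈ Icc (0:ℝ) 1 := fun k hk =>
    ⟨rpow_nonneg hx.1 k, rpow_le_one hx.1 hx.2 hk.le⟩
  have hsplit : ∀ k : ℝ, 0 < k → (x ^ k * φ (x ^ k)) ^ (1 / k) = x * φ (x ^ k) ^ (1 / k) :=
    fun k hk => by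
      rw [mul_rpow (hmem k hk).1 (hφI (hmem k hk)).1, one_div, rpow_rpow_inv hx.1 hk.ne']
  rw [hsplit k₁ hk₁, hsplit k₂ hk₂]
  refine mul_le_mul_of_nonneg_left ?_ hx.1
  obtain ⟨hφ₂0, hφ₂1⟩ := hφI (hmem k₂ hk₂)
  calc φ (x ^ k₁) ^ (1 / k₁)
      ≤ φ (x ^ k₂) ^ (1 / k₁) :=
        rpow_le_rpow (hφI (hmem k₁ hk₁)).1
          (hφ (hmem k₂ hk₂) (hmem k₁ hk₁) (rpow_le_rpow_of_exponent_ge' hx.1 hx.2 hk₁.le hk))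
          (by positivity)
    _ ≤ φ (x ^ k₂) ^ (1 / k₂) :=
        rpow_le_rpow_of_exponent_ge' hφ₂0 hφ₂1 (by positivity) (one_div_le_one_div_of_le hk₁ hk)

lemma integral_eq_mul_integral_comp_mul (g : ℝ → ℝ) (y : ℝ) :
    ∫ t in (0:ℝ)..y, g t = y * ∫ s in (0:ℝ)..1, g (y * s) := by
  rw [intervalIntegral.mul_integral_comp_mul_left, mul_zero, mul_one]

section
variable {g : ℝ → ℝ}

lemma intervalIntegrable_comp_mul (hg : AntitoneOn g (Icc 0 1)) {y : ℝ} (hy : y ∈ Icc (0:ℝ) 1) :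
    IntervalIntegrable (fun s => g (y * s)) MeasureTheory.volume 0 1 := by
  refine AntitoneOn.intervalIntegrable fun s hs t ht hst => ?_
  rw [uIcc_of_le zero_le_one] at hs ht
  exact hg (unitInterval.mul_mem hy hs) (unitInterval.mul_mem hy ht)
    (mul_le_mul_of_nonneg_left hst hy.1)

lemma antitoneOn_integral_comp_mul (hg : AntitoneOn g (Icc 0 1)) :
    AntitoneOn (fun y => ∫ s in (0:ℝ)..1, g (y * s)) (Icc 0 1) := fun _ hy _ hz hyz =>
  intervalIntegral.integral_mono_on zero_le_one (intervalIntegrable_comp_mul hg hz)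
    (intervalIntegrable_comp_mul hg hy) fun _ hs =>
      hg (unitInterval.mul_mem hy hs) (unitInterval.mul_mem hz hs)
        (mul_le_mul_of_nonneg_right hyz hs.1)

lemma mapsTo_integral_comp_mul (hg : AntitoneOn g (Icc 0 1)) (hg₁ : 0 ≤ g 1) (hg₀ : g 0 ≤ 1) :
    MapsTo (fun y => ∫ s in (0:ℝ)..1, g (y * s)) (Icc 0 1) (Icc 0 1) := by
  intro y hy
  have hbound : ∀ s ∈ Icc (0:ℝ) 1, g 1 ≤ g (y * s) ∧ g (y * s) ≤ g 0 := fun s hs =>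
    have hys := unitInterval.mul_mem hy hs
    ⟨hg hys unitInterval.one_mem hys.2, hg unitInterval.zero_mem hys hys.1⟩
  constructor
  · exact intervalIntegral.integral_nonneg zero_le_one fun s hs => hg₁.trans (hbound s hs).1
  · calc ∫ s in (0:ℝ)..1, g (y * s) ≤ ∫ s in (0:ℝ)..1, (1:ℝ) :=
          intervalIntegral.integral_mono_on zero_le_one (intervalIntegrable_comp_mul hg hy)
            intervalIntegrable_const fun s hs => (hbound s hs).2.trans hg₀
      _ = 1 := by simp

theorem integral_rpow_one_div_le_of_antitoneOn (hg : AntitoneOn g (Icc 0 1)) (hg₁ : 0 ≤ g 1)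
    (hg₀ : g 0 ≤ 1) {x k₁ k₂ : ℝ} (hx : x ∈ Icc (0:ℝ) 1) (hk₁ : 0 < k₁) (hk : k₁ ≤ k₂) :
    (∫ t in (0:ℝ)..x ^ k₁, g t) ^ (1 / k₁) ≤ (∫ t in (0:ℝ)..x ^ k₂, g t) ^ (1 / k₂) := by
  simp only [integral_eq_mul_integral_comp_mul g]
  exact rpow_one_div_mul_rpow_le_of_antitoneOn (antitoneOn_integral_comp_mul hg)
    (mapsTo_integral_comp_mul hg hg₁ hg₀) hx hk₁ hk

end

section
variable {p : ℝ}

lemma one_le_one_add_rpow {t : ℝ} (ht : 0 ≤ t) : 1 ≤ 1 + t ^ p :=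
  le_add_of_nonneg_right (rpow_nonneg ht p)

lemma antitoneOn_one_add_rpow_rpow (hp : 0 ≤ p) {q : ℝ} (hq : q ≤ 0) :
    AntitoneOn (fun t : ℝ => (1 + t ^ p) ^ q) (Ici 0) := fun _ hs _ _ hst =>
  rpow_le_rpow_of_nonpos (zero_lt_one.trans_le (one_le_one_add_rpow hs))
    (add_le_add_right (rpow_le_rpow hs hst hp) 1) hq

lemma antitoneOn_inv_one_add_rpow (hp : 0 ≤ p) :
    AntitoneOn (fun t : ℝ => (1 + t ^ p)⁻¹) (Ici 0) := by
  simpa only [rpow_neg_one] using antitoneOn_one_add_rpow_rpow hp (q := -1) (by norm_num)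

end

theorem arctanp_arsinhp_rpow_increasing (p x : ℝ) (hp : 1 < p)
    (hx : x ∈ Set.Ioo (0:ℝ) 1) (k₁ k₂ : ℝ) (hk₁ : 0 < k₁) (hk : k₁ < k₂) :
    (arctanp p (x ^ k₁)) ^ (1 / k₁) ≤ (arctanp p (x ^ k₂)) ^ (1 / k₂) ∧
      (arsinhp p (x ^ k₁)) ^ (1 / k₁) ≤ (arsinhp p (x ^ k₂)) ^ (1 / k₂) := by
  have hp₀ : 0 ≤ p := zero_le_one.trans hp.le
  have hx' : x ∈ Icc (0:ℝ) 1 := Ioo_subset_Icc_self hx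
  have hq : -1 / p ≤ 0 := div_nonpos_of_nonpos_of_nonneg (by norm_num) hp₀
  constructor
  · exact integral_rpow_one_div_le_of_antitoneOn
      ((antitoneOn_inv_one_add_rpow hp₀).mono Icc_subset_Ici_self) (by positivity)
      (inv_le_one_of_one_le₀ (one_le_one_add_rpow le_rfl)) hx' hk₁ hk.le
  · exact integral_rpow_one_div_le_of_antitoneOn
      ((antitoneOn_one_add_rpow_rpow hp₀ hq).mono Icc_subset_Ici_self) (by positivity)
      (rpow_le_one_of_one_le_of_nonpos (one_le_one_add_rpow le_rfl) hq) hx' hk₁ hk.le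
end

section
/- For every p > 1 and all r, s ∈ (0,1), one has artanh_p(r·s) ≤ √(artanh_p(r²)·artanh_p(s²)) ≤ artanh_p(r)·artanh_p(s). -/
open Real

namespace ArtanhpAux

variable {p : ℝ}

lemma cont_rpow (hp : 0 < p) : Continuous fun t : ℝ => t ^ p :=
  continuous_iff_continuousAt.2 fun t => Real.continuousAt_rpow_const t p (Or.inr hp.le)

lemma denom_pos (hp : 0 < p) {t : ℝ} (ht0 : -1 < t) (ht1 : t < 1) : 0 < 1 - t ^ p := by
  have habs : |t| < 1 := abs_lt.2 ⟨ht0, ht1⟩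
  have h1 : |t ^ p| ≤ |t| ^ p := Real.abs_rpow_le_abs_rpow t p
  have h2 : |t| ^ p < 1 := Real.rpow_lt_one (abs_nonneg t) habs hp
  have := (abs_lt.1 (h1.trans_lt h2)).2
  linarith

lemma contAt_g (hp : 0 < p) {t : ℝ} (ht0 : -1 < t) (ht1 : t < 1) :
    ContinuousAt (fun t : ℝ => (1 - t ^ p)⁻¹) t := by
  have h := denom_pos hp ht0 ht1
  exact ((continuous_const.sub (cont_rpow hp)).continuousAt).inv₀ (ne_of_gt h)

lemma contOn_g (hp : 0 < p) {b : ℝ} (hb : b < 1) :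
    ContinuousOn (fun t : ℝ => (1 - t ^ p)⁻¹) (Set.Icc 0 b) := by
  intro t ht
  exact (contAt_g hp (by linarith [ht.1]) (lt_of_le_of_lt ht.2 hb)).continuousWithinAt

lemma intInt (hp : 0 < p) {b : ℝ} (hb0 : 0 ≤ b) (hb : b < 1) :
    IntervalIntegrable (fun t : ℝ => (1 - t ^ p)⁻¹) MeasureTheory.volume 0 b := by
  exact ContinuousOn.intervalIntegrable (by rw [Set.uIcc_of_le hb0]; exact contOn_g hp hb)

lemma hasDerivAt_artanhp (hp : 0 < p) {y : ℝ} (hy0 : 0 ≤ y) (hy1 : y < 1) :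
    HasDerivAt (artanhp p) ((1 - y ^ p)⁻¹) y := by
  have hmeas : StronglyMeasurableAtFilter (fun t : ℝ => (1 - t ^ p)⁻¹) (nhds y)
      MeasureTheory.volume := by
    refine ContinuousAt.stronglyMeasurableAtFilter isOpen_Ioo
      (fun t ht => contAt_g hp ht.1 ht.2) y ⟨by linarith, hy1⟩
  exact intervalIntegral.integral_hasDerivAt_right (intInt hp hy0 hy1) hmeas
    (contAt_g hp (by linarith) hy1)

lemma self_le_artanhp (hp : 0 < p) {x : ℝ} (hx0 : 0 ≤ x) (hx1 : x < 1) :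
    x ≤ artanhp p x := by
  have h : ∀ t ∈ Set.Icc (0:ℝ) x, (1:ℝ) ≤ (1 - t ^ p)⁻¹ := by
    intro t ht
    have hd : 0 < 1 - t ^ p := denom_pos hp (by linarith [ht.1]) (lt_of_le_of_lt ht.2 hx1)
    have hle : 1 - t ^ p ≤ 1 := by
      have : 0 ≤ t ^ p := Real.rpow_nonneg ht.1 p
      linarith
    exact (one_le_inv₀ hd).2 hle
  calc x = ∫ _ in (0:ℝ)..x, (1:ℝ) := by simp
    _ ≤ artanhp p x := intervalIntegral.integral_mono_on hx0
        intervalIntegrable_const (intInt hp hx0 hx1) h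

lemma artanhp_nonneg (hp : 0 < p) {x : ℝ} (hx0 : 0 ≤ x) (hx1 : x < 1) :
    0 ≤ artanhp p x := hx0.trans (self_le_artanhp hp hx0 hx1)

lemma artanhp_zero : artanhp p 0 = 0 := intervalIntegral.integral_same

lemma sq_rpow {x : ℝ} (hx : 0 ≤ x) : (x ^ 2) ^ p = (x ^ p) ^ 2 := by
  rw [← Real.rpow_natCast x 2, ← Real.rpow_natCast (x ^ p) 2, ← Real.rpow_mul hx,
    ← Real.rpow_mul hx, mul_comm]

/-- substitution: `artanhp p c = c * ∫₀¹ (1-(cu)^p)⁻¹ du`. -/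
lemma subst {c : ℝ} (hc : c ≠ 0) :
    artanhp p c = c * ∫ u in (0:ℝ)..1, (1 - (c * u) ^ p)⁻¹ := by
  have h := intervalIntegral.integral_comp_mul_left (a := 0) (b := 1)
    (fun t : ℝ => (1 - t ^ p)⁻¹) hc
  rw [mul_zero, mul_one] at h
  rw [artanhp]
  rw [h, smul_eq_mul, ← mul_assoc, mul_inv_cancel₀ hc, one_mul]

/-- Cauchy–Schwarz for interval integrals of continuous functions. -/
lemma cauchy_schwarz {f g : ℝ → ℝ} {a b : ℝ} (hab : a ≤ b)
    (hf : ContinuousOn f (Set.Icc a b)) (hg : ContinuousOn g (Set.Icc a b)) :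
    (∫ u in a..b, f u * g u) ^ 2 ≤
      (∫ u in a..b, f u ^ 2) * (∫ u in a..b, g u ^ 2) := by
  have hu : Set.uIcc a b = Set.Icc a b := Set.uIcc_of_le hab
  have hfi : IntervalIntegrable (fun u => f u ^ 2) MeasureTheory.volume a b :=
    ContinuousOn.intervalIntegrable (by rw [hu]; exact hf.pow 2)
  have hgi : IntervalIntegrable (fun u => g u ^ 2) MeasureTheory.volume a b :=
    ContinuousOn.intervalIntegrable (by rw [hu]; exact hg.pow 2)
  have hfgi : IntervalIntegrable (fun u => f u * g u) MeasureTheory.volume a b :=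
    ContinuousOn.intervalIntegrable (by rw [hu]; exact hf.mul hg)
  set I0 := ∫ u in a..b, f u ^ 2 with hI0
  set I1 := ∫ u in a..b, f u * g u with hI1
  set I2 := ∫ u in a..b, g u ^ 2 with hI2
  have key : ∀ lam : ℝ, 0 ≤ I2 * (lam * lam) + (-(2 * I1)) * lam + I0 := by
    intro lam
    have h1 : (∫ u in a..b, (f u - lam * g u) ^ 2) =
        I0 - (2 * lam) * I1 + lam ^ 2 * I2 := by
      have : (fun u => (f u - lam * g u) ^ 2) =
          fun u => f u ^ 2 - (2 * lam) * (f u * g u) + lam ^ 2 * (g u ^ 2) := by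
        funext u; ring
      rw [this, intervalIntegral.integral_add (hfi.sub (hfgi.const_mul _)) (hgi.const_mul _),
        intervalIntegral.integral_sub hfi (hfgi.const_mul _),
        intervalIntegral.integral_const_mul, intervalIntegral.integral_const_mul]
    have h0 : 0 ≤ ∫ u in a..b, (f u - lam * g u) ^ 2 :=
      intervalIntegral.integral_nonneg hab (fun u _ => sq_nonneg _)
    rw [h1] at h0
    nlinarith [h0]
  have hd := discrim_le_zero key
  rw [discrim] at hd
  nlinarith [hd]


/-- pointwise bound: `(1-√(ab))⁻¹ ≤ √((1-a)⁻¹)·√((1-b)⁻¹)` for `a,b ∈ [0,1)`. -/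
lemma pointwise_bound {a b : ℝ} (ha0 : 0 ≤ a) (ha1 : a < 1) (hb0 : 0 ≤ b) (hb1 : b < 1) :
    (1 - Real.sqrt (a * b))⁻¹ ≤ Real.sqrt ((1 - a)⁻¹) * Real.sqrt ((1 - b)⁻¹) := by
  have hab1 : a * b < 1 := by nlinarith
  have hs1 : Real.sqrt (a * b) < 1 := by
    rw [show (1:ℝ) = Real.sqrt 1 by simp]
    exact Real.sqrt_lt_sqrt (by positivity) hab1
  have hposab : 0 < 1 - Real.sqrt (a * b) := by linarith
  have hA : 0 < 1 - a := by linarith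
  have hB : 0 < 1 - b := by linarith
  have hsqle : Real.sqrt ((1 - a) * (1 - b)) ≤ 1 - Real.sqrt (a * b) := by
    have hsa := Real.sq_sqrt ha0
    have hsb := Real.sq_sqrt hb0
    have hmul : Real.sqrt (a * b) = Real.sqrt a * Real.sqrt b := Real.sqrt_mul ha0 b
    have hineq : (1 - a) * (1 - b) ≤ (1 - Real.sqrt (a * b)) ^ 2 := by
      rw [hmul]
      nlinarith [sq_nonneg (Real.sqrt a - Real.sqrt b), Real.sqrt_nonneg a, Real.sqrt_nonneg b]
    calc Real.sqrt ((1 - a) * (1 - b)) ≤ Real.sqrt ((1 - Real.sqrt (a * b)) ^ 2) :=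
          Real.sqrt_le_sqrt hineq
      _ = 1 - Real.sqrt (a * b) := Real.sqrt_sq hposab.le
  have hrhs : Real.sqrt ((1 - a)⁻¹) * Real.sqrt ((1 - b)⁻¹)
      = (Real.sqrt ((1 - a) * (1 - b)))⁻¹ := by
    rw [← Real.sqrt_mul (by positivity), ← mul_inv, Real.sqrt_inv]
  rw [hrhs]
  have hpos : 0 < Real.sqrt ((1 - a) * (1 - b)) := Real.sqrt_pos.2 (by positivity)
  exact inv_anti₀ hpos hsqle

set_option maxHeartbeats 1000000 in
lemma key_sq (hp : 1 < p) {r s : ℝ} (hr : r ∈ Set.Ioo (0:ℝ) 1) (hs : s ∈ Set.Ioo (0:ℝ) 1) :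
    artanhp p (r * s) ^ 2 ≤ artanhp p (r ^ 2) * artanhp p (s ^ 2) := by
  obtain ⟨hr0, hr1⟩ := hr
  obtain ⟨hs0, hs1⟩ := hs
  have hp0 : 0 < p := by linarith
  -- the three parameters
  have hrs0 : 0 < r * s := by positivity
  have hrs1 : r * s < 1 := by nlinarith
  have hr20 : 0 < r ^ 2 := by positivity
  have hr21 : r ^ 2 < 1 := by nlinarith
  have hs20 : 0 < s ^ 2 := by positivity
  have hs21 : s ^ 2 < 1 := by nlinarith
  -- continuity of substituted integrands
  have contc : ∀ c : ℝ, 0 < c → c < 1 →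
      ContinuousOn (fun u : ℝ => (1 - (c * u) ^ p)⁻¹) (Set.Icc 0 1) := by
    intro c hc0 hc1 u hu
    have h1 : -1 < c * u := by nlinarith [hu.1, hu.2]
    have h2 : c * u < 1 := by nlinarith [hu.1, hu.2]
    exact ((contAt_g hp0 h1 h2).comp (continuous_const.mul continuous_id).continuousAt
      ).continuousWithinAt
  -- sqrt of substituted integrands
  set F : ℝ → ℝ := fun u => Real.sqrt ((1 - (r ^ 2 * u) ^ p)⁻¹) with hF
  set G : ℝ → ℝ := fun u => Real.sqrt ((1 - (s ^ 2 * u) ^ p)⁻¹) with hG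
  have denpos : ∀ c : ℝ, 0 < c → c < 1 → ∀ u ∈ Set.Icc (0:ℝ) 1, 0 < 1 - (c * u) ^ p := by
    intro c hc0 hc1 u hu
    exact denom_pos hp0 (by nlinarith [hu.1, hu.2]) (by nlinarith [hu.1, hu.2])
  have hFcont : ContinuousOn F (Set.Icc 0 1) :=
    (contc _ hr20 hr21).sqrt
  have hGcont : ContinuousOn G (Set.Icc 0 1) :=
    (contc _ hs20 hs21).sqrt
  -- pointwise: integrand of A(rs) ≤ F * G
  have hpt : ∀ u ∈ Set.Icc (0:ℝ) 1, (1 - (r * s * u) ^ p)⁻¹ ≤ F u * G u := by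
    intro u hu
    have ha0 : (0:ℝ) ≤ (r ^ 2 * u) ^ p := Real.rpow_nonneg (by nlinarith [hu.1]) p
    have ha1 : (r ^ 2 * u) ^ p < 1 := by
      have := denpos _ hr20 hr21 u hu; linarith
    have hb0 : (0:ℝ) ≤ (s ^ 2 * u) ^ p := Real.rpow_nonneg (by nlinarith [hu.1]) p
    have hb1 : (s ^ 2 * u) ^ p < 1 := by
      have := denpos _ hs20 hs21 u hu; linarith
    have hkey : (r * s * u) ^ p = Real.sqrt ((r ^ 2 * u) ^ p * (s ^ 2 * u) ^ p) := by
      rw [← Real.mul_rpow (by nlinarith [hu.1]) (by nlinarith [hu.1])]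
      have : r ^ 2 * u * (s ^ 2 * u) = (r * s * u) ^ 2 := by ring
      rw [this, sq_rpow (by nlinarith [hu.1]), Real.sqrt_sq (Real.rpow_nonneg (by nlinarith [hu.1]) p)]
    rw [hkey]
    exact pointwise_bound ha0 ha1 hb0 hb1
  -- substituted representations
  have hArs : artanhp p (r * s) = (r * s) * ∫ u in (0:ℝ)..1, (1 - (r * s * u) ^ p)⁻¹ :=
    subst hrs0.ne'
  have hAr2 : artanhp p (r ^ 2) = r ^ 2 * ∫ u in (0:ℝ)..1, (1 - (r ^ 2 * u) ^ p)⁻¹ :=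
    subst hr20.ne'
  have hAs2 : artanhp p (s ^ 2) = s ^ 2 * ∫ u in (0:ℝ)..1, (1 - (s ^ 2 * u) ^ p)⁻¹ :=
    subst hs20.ne'
  -- integral comparison
  have hint1 : (∫ u in (0:ℝ)..1, (1 - (r * s * u) ^ p)⁻¹) ≤ ∫ u in (0:ℝ)..1, F u * G u := by
    refine intervalIntegral.integral_mono_on zero_le_one ?_ ?_ hpt
    · exact ContinuousOn.intervalIntegrable
        (by rw [Set.uIcc_of_le zero_le_one]; exact contc _ hrs0 hrs1)
    · exact ContinuousOn.intervalIntegrable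
        (by rw [Set.uIcc_of_le zero_le_one]; exact hFcont.mul hGcont)
  have hCS : (∫ u in (0:ℝ)..1, F u * G u) ^ 2 ≤
      (∫ u in (0:ℝ)..1, F u ^ 2) * (∫ u in (0:ℝ)..1, G u ^ 2) :=
    cauchy_schwarz zero_le_one hFcont hGcont
  have hFsq : (∫ u in (0:ℝ)..1, F u ^ 2) = ∫ u in (0:ℝ)..1, (1 - (r ^ 2 * u) ^ p)⁻¹ := by
    refine intervalIntegral.integral_congr fun u hu => ?_
    rw [Set.uIcc_of_le zero_le_one] at hu
    exact Real.sq_sqrt (inv_nonneg.2 (denpos _ hr20 hr21 u hu).le)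
  have hGsq : (∫ u in (0:ℝ)..1, G u ^ 2) = ∫ u in (0:ℝ)..1, (1 - (s ^ 2 * u) ^ p)⁻¹ := by
    refine intervalIntegral.integral_congr fun u hu => ?_
    rw [Set.uIcc_of_le zero_le_one] at hu
    exact Real.sq_sqrt (inv_nonneg.2 (denpos _ hs20 hs21 u hu).le)
  -- nonnegativity of the rs-integral
  have hnn : 0 ≤ ∫ u in (0:ℝ)..1, (1 - (r * s * u) ^ p)⁻¹ :=
    intervalIntegral.integral_nonneg zero_le_one
      (fun u hu => inv_nonneg.2 (denpos _ hrs0 hrs1 u hu).le)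
  rw [hArs, hAr2, hAs2]
  rw [hFsq, hGsq] at hCS
  calc ((r * s) * ∫ u in (0:ℝ)..1, (1 - (r * s * u) ^ p)⁻¹) ^ 2
      = (r * s) ^ 2 * (∫ u in (0:ℝ)..1, (1 - (r * s * u) ^ p)⁻¹) ^ 2 := by ring
    _ ≤ (r * s) ^ 2 * (∫ u in (0:ℝ)..1, F u * G u) ^ 2 := by
        have h2 : (∫ u in (0:ℝ)..1, (1 - (r * s * u) ^ p)⁻¹) ^ 2 ≤
            (∫ u in (0:ℝ)..1, F u * G u) ^ 2 := by
          exact pow_le_pow_left₀ hnn hint1 2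
        nlinarith [h2, sq_nonneg (r * s)]
    _ ≤ (r * s) ^ 2 * ((∫ u in (0:ℝ)..1, (1 - (r ^ 2 * u) ^ p)⁻¹)
          * (∫ u in (0:ℝ)..1, (1 - (s ^ 2 * u) ^ p)⁻¹)) := by
        have := hCS; nlinarith [sq_nonneg (r * s)]
    _ = (r ^ 2 * ∫ u in (0:ℝ)..1, (1 - (r ^ 2 * u) ^ p)⁻¹)
          * (s ^ 2 * ∫ u in (0:ℝ)..1, (1 - (s ^ 2 * u) ^ p)⁻¹) := by ring

set_option maxHeartbeats 1000000 in
lemma artanhp_sq_arg_le (hp : 1 < p) {x : ℝ} (hx0 : 0 < x) (hx1 : x < 1) :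
    artanhp p (x ^ 2) ≤ artanhp p x ^ 2 := by
  have hp0 : 0 < p := by linarith
  set f : ℝ → ℝ := fun y => artanhp p y ^ 2 - artanhp p (y ^ 2) with hf
  have hder : ∀ y ∈ Set.Icc (0:ℝ) x, HasDerivAt f
      ((2:ℕ) * artanhp p y ^ 1 * (1 - y ^ p)⁻¹ - (1 - (y ^ 2) ^ p)⁻¹ * ((2:ℕ) * y ^ 1)) y := by
    intro y hy
    have hy1 : y < 1 := lt_of_le_of_lt hy.2 hx1
    have hy0 : 0 ≤ y := hy.1
    have h1 : HasDerivAt (artanhp p) ((1 - y ^ p)⁻¹) y := hasDerivAt_artanhp hp0 hy0 hy1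
    have h2 : HasDerivAt (artanhp p) ((1 - (y ^ 2) ^ p)⁻¹) (y ^ 2) :=
      hasDerivAt_artanhp hp0 (by positivity) (by nlinarith)
    have h3 : HasDerivAt ((artanhp p) ∘ (fun z : ℝ => z ^ 2))
        ((1 - (y ^ 2) ^ p)⁻¹ * ((2:ℕ) * y ^ 1)) y :=
      HasDerivAt.comp y h2 (hasDerivAt_pow 2 y)
    exact (h1.pow 2).sub h3
  have hmono : MonotoneOn f (Set.Icc 0 x) := by
    apply monotoneOn_of_deriv_nonneg (convex_Icc 0 x)
    · intro y hy
      exact (hder y hy).continuousAt.continuousWithinAt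
    · intro y hy
      rw [interior_Icc] at hy
      exact ((hder y (Set.Ioo_subset_Icc_self hy)).differentiableAt).differentiableWithinAt
    · intro y hy
      rw [interior_Icc] at hy
      have hy0 : 0 < y := hy.1
      have hy1 : y < 1 := lt_trans hy.2 hx1
      rw [(hder y (Set.Ioo_subset_Icc_self hy)).deriv]
      have hc : 0 < 1 - y ^ p := denom_pos hp0 (by linarith) hy1
      have hcn : 0 ≤ y ^ p := Real.rpow_nonneg hy0.le p
      have hc2 : (1 - (y ^ 2) ^ p)⁻¹ = (1 - y ^ p)⁻¹ * (1 + y ^ p)⁻¹ := by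
        rw [sq_rpow hy0.le, show (1:ℝ) - (y ^ p) ^ 2 = (1 - y ^ p) * (1 + y ^ p) by ring,
          mul_inv]
      have hAy : y ≤ artanhp p y := self_le_artanhp hp0 hy0.le hy1
      have h1p : (1 + y ^ p)⁻¹ ≤ 1 := inv_le_one_of_one_le₀ (by linarith)
      have hinv : 0 ≤ (1 - y ^ p)⁻¹ := inv_nonneg.2 hc.le
      have h2 : (1 + y ^ p)⁻¹ * (2 * y) ≤ 2 * artanhp p y := by
        have ha : (1 + y ^ p)⁻¹ * (2 * y) ≤ 1 * (2 * y) :=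
          mul_le_mul_of_nonneg_right h1p (by positivity)
        linarith
      have hkey : 0 ≤ (1 - y ^ p)⁻¹ * (2 * artanhp p y - (1 + y ^ p)⁻¹ * (2 * y)) :=
        mul_nonneg hinv (by linarith)
      rw [hc2]
      push_cast
      nlinarith [hkey]
  have h0mem : (0:ℝ) ∈ Set.Icc (0:ℝ) x := ⟨le_refl 0, hx0.le⟩
  have hxmem : x ∈ Set.Icc (0:ℝ) x := ⟨hx0.le, le_refl x⟩
  have := hmono h0mem hxmem hx0.le
  have hf0 : f 0 = 0 := by
    simp [hf, artanhp_zero]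
  have hfx : f x = artanhp p x ^ 2 - artanhp p (x ^ 2) := rfl
  rw [hf0, hfx] at this
  linarith

end ArtanhpAux

open ArtanhpAux in
theorem artanhp_mul_inequalities (p r s : ℝ) (hp : 1 < p)
    (hr : r ∈ Set.Ioo (0:ℝ) 1) (hs : s ∈ Set.Ioo (0:ℝ) 1) :
    artanhp p (r * s) ≤ Real.sqrt (artanhp p (r ^ 2) * artanhp p (s ^ 2)) ∧
      Real.sqrt (artanhp p (r ^ 2) * artanhp p (s ^ 2)) ≤ artanhp p r * artanhp p s := by
  obtain ⟨hr0, hr1⟩ := hr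
  obtain ⟨hs0, hs1⟩ := hs
  have hp0 : 0 < p := by linarith
  have hrs0 : 0 < r * s := by positivity
  have hrs1 : r * s < 1 := by nlinarith
  have hr21 : r ^ 2 < 1 := by nlinarith
  have hs21 : s ^ 2 < 1 := by nlinarith
  have hr2nn : 0 ≤ artanhp p (r ^ 2) := artanhp_nonneg hp0 (by positivity) hr21
  have hs2nn : 0 ≤ artanhp p (s ^ 2) := artanhp_nonneg hp0 (by positivity) hs21
  have hrnn : 0 ≤ artanhp p r := artanhp_nonneg hp0 hr0.le hr1
  have hsnn : 0 ≤ artanhp p s := artanhp_nonneg hp0 hs0.le hs1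
  have h1 : artanhp p (r * s) ^ 2 ≤ artanhp p (r ^ 2) * artanhp p (s ^ 2) :=
    key_sq hp ⟨hr0, hr1⟩ ⟨hs0, hs1⟩
  constructor
  · exact (Real.le_sqrt (artanhp_nonneg hp0 hrs0.le hrs1) (mul_nonneg hr2nn hs2nn)).2 h1
  · have h2 : artanhp p (r ^ 2) ≤ artanhp p r ^ 2 := artanhp_sq_arg_le hp hr0 hr1
    have h3 : artanhp p (s ^ 2) ≤ artanhp p s ^ 2 := artanhp_sq_arg_le hp hs0 hs1
    calc Real.sqrt (artanhp p (r ^ 2) * artanhp p (s ^ 2))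
        ≤ Real.sqrt (artanhp p r ^ 2 * artanhp p s ^ 2) :=
          Real.sqrt_le_sqrt (mul_le_mul h2 h3 hs2nn (sq_nonneg _))
      _ = artanhp p r * artanhp p s := by
          rw [← mul_pow, Real.sqrt_sq (mul_nonneg hrnn hsnn)]
end

section
/- For every p > 1 and all r, s ∈ (0,1), one has arsinh_p(r)·arsinh_p(s) ≤ √(arsinh_p(r²)·arsinh_p(s²)) ≤ arsinh_p(r·s), and likewise arctan_p(r)·arctan_p(s) ≤ √(arctan_p(r²)·arctan_p(s²)) ≤ arctan_p(r·s). -/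
open Real

namespace GenAux

open Set MeasureTheory intervalIntegral

variable {p c : ℝ}

lemma base_pos (hp : 0 < p) {t : ℝ} (ht : 0 ≤ t) : 0 < 1 + t ^ p := by
  have := Real.rpow_nonneg ht p
  linarith

lemma phi_pos (hp : 0 < p) {t : ℝ} (ht : 0 ≤ t) : 0 < (1 + t ^ p) ^ (-c) :=
  Real.rpow_pos_of_pos (base_pos hp ht) _

lemma phi_le_one (hp : 0 < p) (hc : 0 < c) {t : ℝ} (ht : 0 ≤ t) : (1 + t ^ p) ^ (-c) ≤ 1 := by
  have := Real.rpow_nonneg ht p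
  exact Real.rpow_le_one_of_one_le_of_nonpos (by linarith) (by linarith)

lemma phi_anti (hp : 0 < p) (hc : 0 < c) {a b : ℝ} (ha : 0 ≤ a) (hab : a ≤ b) :
    (1 + b ^ p) ^ (-c) ≤ (1 + a ^ p) ^ (-c) := by
  have h1 : a ^ p ≤ b ^ p := Real.rpow_le_rpow ha hab hp.le
  exact Real.rpow_le_rpow_of_nonpos (base_pos hp ha) (by linarith) (by linarith)

lemma phi_contOn (hp : 0 < p) : ContinuousOn (fun t : ℝ => (1 + t ^ p) ^ (-c)) (Ici 0) := by
  apply ContinuousOn.rpow_const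
  · exact continuousOn_const.add (continuousOn_id.rpow_const fun x _ => Or.inr hp.le)
  · exact fun x hx => Or.inl (base_pos hp hx).ne'

lemma intInt1 (hp : 0 < p) {a b : ℝ} (ha : 0 ≤ a) (hb : 0 ≤ b) :
    IntervalIntegrable (fun u : ℝ => (1 + u ^ p) ^ (-c)) volume a b := by
  have hsub : uIcc a b ⊆ Ici 0 := fun x hx => le_trans (le_min ha hb) hx.1
  exact ((phi_contOn hp).mono hsub).intervalIntegrable

lemma intInt (hp : 0 < p) {k a b : ℝ} (hk : 0 ≤ k) (ha : 0 ≤ a) (hb : 0 ≤ b) :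
    IntervalIntegrable (fun u : ℝ => (1 + (k * u) ^ p) ^ (-c)) volume a b := by
  have hsub : uIcc a b ⊆ Ici 0 := fun x hx => le_trans (le_min ha hb) hx.1
  apply ContinuousOn.intervalIntegrable
  exact (phi_contOn hp).comp ((continuous_const.mul continuous_id).continuousOn)
    fun x hx => mul_nonneg hk (hsub hx)

lemma F_nonneg (hp : 0 < p) {x : ℝ} (hx : 0 ≤ x) :
    0 ≤ ∫ t in (0:ℝ)..x, (1 + t ^ p) ^ (-c) :=
  intervalIntegral.integral_nonneg hx fun u hu => (phi_pos hp hu.1).le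

lemma F_le (hp : 0 < p) (hc : 0 < c) {x : ℝ} (hx : 0 ≤ x) :
    (∫ t in (0:ℝ)..x, (1 + t ^ p) ^ (-c)) ≤ x := by
  calc (∫ t in (0:ℝ)..x, (1 + t ^ p) ^ (-c)) ≤ ∫ _t in (0:ℝ)..x, (1:ℝ) :=
        integral_mono_on hx (intInt1 hp le_rfl hx) intervalIntegrable_const
          fun t ht => phi_le_one hp hc ht.1
    _ = x := by simp

lemma F_mul (k y : ℝ) :
    (∫ t in (0:ℝ)..k * y, (1 + t ^ p) ^ (-c))
      = k * ∫ u in (0:ℝ)..y, (1 + (k * u) ^ p) ^ (-c) := by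
  have h := intervalIntegral.smul_integral_comp_mul_left
    (a := 0) (b := y) (fun t : ℝ => (1 + t ^ p) ^ (-c)) k
  simp only [smul_eq_mul, mul_zero] at h
  exact h.symm

lemma cross (hp : 0 < p) (hc : 0 < c) {r s v u : ℝ} (hr : 0 ≤ r) (hrs : r ≤ s)
    (hv : 0 ≤ v) (hvu : v ≤ u) :
    (1 + (r * v) ^ p) ^ (-c) * (1 + (s * u) ^ p) ^ (-c)
      ≤ (1 + (s * v) ^ p) ^ (-c) * (1 + (r * u) ^ p) ^ (-c) := by
  have hu : 0 ≤ u := hv.trans hvu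
  have hs : 0 ≤ s := hr.trans hrs
  rw [← Real.mul_rpow (base_pos hp (mul_nonneg hr hv)).le (base_pos hp (mul_nonneg hs hu)).le,
    ← Real.mul_rpow (base_pos hp (mul_nonneg hs hv)).le (base_pos hp (mul_nonneg hr hu)).le]
  apply Real.rpow_le_rpow_of_nonpos
    (mul_pos (base_pos hp (mul_nonneg hs hv)) (base_pos hp (mul_nonneg hr hu)))
    ?_ (by linarith)
  have e1 : (r * v) ^ p = r ^ p * v ^ p := Real.mul_rpow hr hv
  have e2 : (s * u) ^ p = s ^ p * u ^ p := Real.mul_rpow hs hu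
  have e3 : (s * v) ^ p = s ^ p * v ^ p := Real.mul_rpow hs hv
  have e4 : (r * u) ^ p = r ^ p * u ^ p := Real.mul_rpow hr hu
  have hrp : r ^ p ≤ s ^ p := Real.rpow_le_rpow hr hrs hp.le
  have hvp : v ^ p ≤ u ^ p := Real.rpow_le_rpow hv hvu hp.le
  rw [e1, e2, e3, e4]
  nlinarith [mul_nonneg (sub_nonneg.2 hrp) (sub_nonneg.2 hvp),
    Real.rpow_nonneg hr p, Real.rpow_nonneg hv p]

lemma prod_le (hp : 0 < p) (hc : 0 < c) {r s : ℝ} (hr0 : 0 < r) (hrs : r ≤ s) :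
    (∫ t in (0:ℝ)..r * r, (1 + t ^ p) ^ (-c)) * (∫ t in (0:ℝ)..s * s, (1 + t ^ p) ^ (-c))
      ≤ (∫ t in (0:ℝ)..r * s, (1 + t ^ p) ^ (-c)) ^ 2 := by
  have hs0 : 0 < s := lt_of_lt_of_le hr0 hrs
  set f : ℝ → ℝ := fun u => (1 + (r * u) ^ p) ^ (-c) with hf
  set g : ℝ → ℝ := fun u => (1 + (s * u) ^ p) ^ (-c) with hg
  have hfi : ∀ a b : ℝ, 0 ≤ a → 0 ≤ b → IntervalIntegrable f volume a b :=
    fun a b ha hb => intInt hp hr0.le ha hb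
  have hgi : ∀ a b : ℝ, 0 ≤ a → 0 ≤ b → IntervalIntegrable g volume a b :=
    fun a b ha hb => intInt hp hs0.le ha hb
  set A := ∫ u in (0:ℝ)..r, f u with hA
  set B := ∫ u in (0:ℝ)..s, f u with hB
  set C := ∫ u in (0:ℝ)..r, g u with hC
  set D := ∫ u in (0:ℝ)..s, g u with hD
  have hBA : B = A + ∫ u in r..s, f u :=
    (integral_add_adjacent_intervals (hfi 0 r le_rfl hr0.le) (hfi r s hr0.le hs0.le)).symm
  have hDC : D = C + ∫ u in r..s, g u :=
    (integral_add_adjacent_intervals (hgi 0 r le_rfl hr0.le) (hgi r s hr0.le hs0.le)).symm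
  have hA0 : 0 ≤ A :=
    intervalIntegral.integral_nonneg hr0.le fun u hu => (phi_pos hp (mul_nonneg hr0.le hu.1)).le
  have hC0 : 0 ≤ C :=
    intervalIntegral.integral_nonneg hr0.le fun u hu => (phi_pos hp (mul_nonneg hs0.le hu.1)).le
  have hkey : ∀ u ∈ Icc r s, A * g u ≤ C * f u := by
    intro u hu
    have h1 : A * g u = ∫ v in (0:ℝ)..r, f v * g u := by
      rw [intervalIntegral.integral_mul_const]
    have h2 : C * f u = ∫ v in (0:ℝ)..r, g v * f u := by
      rw [intervalIntegral.integral_mul_const]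
    rw [h1, h2]
    apply integral_mono_on hr0.le ((hfi 0 r le_rfl hr0.le).mul_const _)
      ((hgi 0 r le_rfl hr0.le).mul_const _)
    intro v hv
    exact cross hp hc hr0.le hrs hv.1 (hv.2.trans hu.1)
  have hmono : (∫ u in r..s, A * g u) ≤ ∫ u in r..s, C * f u :=
    integral_mono_on hrs ((hgi r s hr0.le hs0.le).const_mul A)
      ((hfi r s hr0.le hs0.le).const_mul C) hkey
  rw [intervalIntegral.integral_const_mul, intervalIntegral.integral_const_mul] at hmono
  have hmain : A * D ≤ B * C := by
    rw [hDC, hBA]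
    nlinarith [hmono]
  have e1 : (∫ t in (0:ℝ)..r * r, (1 + t ^ p) ^ (-c)) = r * A := F_mul r r
  have e2 : (∫ t in (0:ℝ)..s * s, (1 + t ^ p) ^ (-c)) = s * D := F_mul s s
  have e3 : (∫ t in (0:ℝ)..r * s, (1 + t ^ p) ^ (-c)) = r * B := F_mul r s
  have e4 : (∫ t in (0:ℝ)..r * s, (1 + t ^ p) ^ (-c)) = s * C := by
    rw [mul_comm r s]; exact F_mul s r
  calc (∫ t in (0:ℝ)..r * r, (1 + t ^ p) ^ (-c)) * (∫ t in (0:ℝ)..s * s, (1 + t ^ p) ^ (-c))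
      = (r * s) * (A * D) := by rw [e1, e2]; ring
    _ ≤ (r * s) * (B * C) := mul_le_mul_of_nonneg_left hmain (by positivity)
    _ = (r * B) * (s * C) := by ring
    _ = (∫ t in (0:ℝ)..r * s, (1 + t ^ p) ^ (-c)) ^ 2 := by rw [sq]; nth_rewrite 2 [e4]; rw [e3]

lemma sq_le (hp : 0 < p) (hc : 0 < c) {x : ℝ} (hx0 : 0 < x) (hx1 : x ≤ 1) :
    (∫ t in (0:ℝ)..x, (1 + t ^ p) ^ (-c)) ^ 2 ≤ ∫ t in (0:ℝ)..x * x, (1 + t ^ p) ^ (-c) := by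
  have e : (∫ t in (0:ℝ)..x * x, (1 + t ^ p) ^ (-c))
      = x * ∫ u in (0:ℝ)..x, (1 + (x * u) ^ p) ^ (-c) := F_mul x x
  have h1 : (∫ u in (0:ℝ)..x, (1 + u ^ p) ^ (-c))
      ≤ ∫ u in (0:ℝ)..x, (1 + (x * u) ^ p) ^ (-c) := by
    apply integral_mono_on hx0.le (intInt1 hp le_rfl hx0.le) (intInt hp hx0.le le_rfl hx0.le)
    intro u hu
    exact phi_anti hp hc (mul_nonneg hx0.le hu.1) (mul_le_of_le_one_left hu.1 hx1)
  have h2 : (∫ t in (0:ℝ)..x, (1 + t ^ p) ^ (-c)) ≤ x := F_le hp hc hx0.le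
  have h0 : 0 ≤ ∫ t in (0:ℝ)..x, (1 + t ^ p) ^ (-c) := F_nonneg hp hx0.le
  calc (∫ t in (0:ℝ)..x, (1 + t ^ p) ^ (-c)) ^ 2
      ≤ x * ∫ t in (0:ℝ)..x, (1 + t ^ p) ^ (-c) := by nlinarith
    _ ≤ x * ∫ u in (0:ℝ)..x, (1 + (x * u) ^ p) ^ (-c) :=
        mul_le_mul_of_nonneg_left h1 hx0.le
    _ = ∫ t in (0:ℝ)..x * x, (1 + t ^ p) ^ (-c) := e.symm

lemma key (hp : 1 < p) (hc : 0 < c) {r s : ℝ} (hr : r ∈ Ioo (0:ℝ) 1) (hs : s ∈ Ioo (0:ℝ) 1) :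
    ((∫ t in (0:ℝ)..r, (1 + t ^ p) ^ (-c)) * (∫ t in (0:ℝ)..s, (1 + t ^ p) ^ (-c))
        ≤ Real.sqrt ((∫ t in (0:ℝ)..r ^ 2, (1 + t ^ p) ^ (-c))
            * (∫ t in (0:ℝ)..s ^ 2, (1 + t ^ p) ^ (-c)))) ∧
      Real.sqrt ((∫ t in (0:ℝ)..r ^ 2, (1 + t ^ p) ^ (-c))
          * (∫ t in (0:ℝ)..s ^ 2, (1 + t ^ p) ^ (-c)))
        ≤ ∫ t in (0:ℝ)..r * s, (1 + t ^ p) ^ (-c) := by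
  have hp0 : 0 < p := lt_trans one_pos hp
  have hr2 : r ^ 2 = r * r := sq r
  have hs2 : s ^ 2 = s * s := sq s
  have hFr : 0 ≤ ∫ t in (0:ℝ)..r, (1 + t ^ p) ^ (-c) := F_nonneg hp0 hr.1.le
  have hFs : 0 ≤ ∫ t in (0:ℝ)..s, (1 + t ^ p) ^ (-c) := F_nonneg hp0 hs.1.le
  have hFr2 : 0 ≤ ∫ t in (0:ℝ)..r ^ 2, (1 + t ^ p) ^ (-c) := F_nonneg hp0 (by positivity)
  have hFrs : 0 ≤ ∫ t in (0:ℝ)..r * s, (1 + t ^ p) ^ (-c) :=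
    F_nonneg hp0 (mul_nonneg hr.1.le hs.1.le)
  constructor
  · have h1 : (∫ t in (0:ℝ)..r, (1 + t ^ p) ^ (-c)) ^ 2
        ≤ ∫ t in (0:ℝ)..r ^ 2, (1 + t ^ p) ^ (-c) := by
      rw [hr2]; exact sq_le hp0 hc hr.1 hr.2.le
    have h2 : (∫ t in (0:ℝ)..s, (1 + t ^ p) ^ (-c)) ^ 2
        ≤ ∫ t in (0:ℝ)..s ^ 2, (1 + t ^ p) ^ (-c) := by
      rw [hs2]; exact sq_le hp0 hc hs.1 hs.2.le
    have := Real.sqrt_le_sqrt (mul_le_mul h1 h2 (sq_nonneg _) hFr2)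
    calc (∫ t in (0:ℝ)..r, (1 + t ^ p) ^ (-c)) * (∫ t in (0:ℝ)..s, (1 + t ^ p) ^ (-c))
        = Real.sqrt (((∫ t in (0:ℝ)..r, (1 + t ^ p) ^ (-c))
            * (∫ t in (0:ℝ)..s, (1 + t ^ p) ^ (-c))) ^ 2) :=
          (Real.sqrt_sq (mul_nonneg hFr hFs)).symm
      _ = Real.sqrt ((∫ t in (0:ℝ)..r, (1 + t ^ p) ^ (-c)) ^ 2
            * (∫ t in (0:ℝ)..s, (1 + t ^ p) ^ (-c)) ^ 2) := by rw [mul_pow]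
      _ ≤ _ := this
  · have hmain : (∫ t in (0:ℝ)..r ^ 2, (1 + t ^ p) ^ (-c))
        * (∫ t in (0:ℝ)..s ^ 2, (1 + t ^ p) ^ (-c))
        ≤ (∫ t in (0:ℝ)..r * s, (1 + t ^ p) ^ (-c)) ^ 2 := by
      rcases le_total r s with h | h
      · rw [hr2, hs2]; exact prod_le hp0 hc hr.1 h
      · rw [hr2, hs2, mul_comm (∫ t in (0:ℝ)..r * r, (1 + t ^ p) ^ (-c)),
          mul_comm r s]
        exact prod_le hp0 hc hs.1 h
    calc Real.sqrt ((∫ t in (0:ℝ)..r ^ 2, (1 + t ^ p) ^ (-c))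
          * (∫ t in (0:ℝ)..s ^ 2, (1 + t ^ p) ^ (-c)))
        ≤ Real.sqrt ((∫ t in (0:ℝ)..r * s, (1 + t ^ p) ^ (-c)) ^ 2) :=
          Real.sqrt_le_sqrt hmain
      _ = ∫ t in (0:ℝ)..r * s, (1 + t ^ p) ^ (-c) := Real.sqrt_sq hFrs

end GenAux

theorem arsinhp_arctanp_mul_inequalities (p r s : ℝ) (hp : 1 < p)
    (hr : r ∈ Set.Ioo (0:ℝ) 1) (hs : s ∈ Set.Ioo (0:ℝ) 1) :
    (arsinhp p r * arsinhp p s ≤ Real.sqrt (arsinhp p (r ^ 2) * arsinhp p (s ^ 2)) ∧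
      Real.sqrt (arsinhp p (r ^ 2) * arsinhp p (s ^ 2)) ≤ arsinhp p (r * s)) ∧
    (arctanp p r * arctanp p s ≤ Real.sqrt (arctanp p (r ^ 2) * arctanp p (s ^ 2)) ∧
      Real.sqrt (arctanp p (r ^ 2) * arctanp p (s ^ 2)) ≤ arctanp p (r * s)) := by
  have hp0 : 0 < p := lt_trans one_pos hp
  have ea : ∀ x : ℝ, arsinhp p x = ∫ t in (0:ℝ)..x, (1 + t ^ p) ^ (-(1 / p)) := by
    intro x; simp only [arsinhp, neg_div]
  have eb : ∀ x : ℝ, arctanp p x = ∫ t in (0:ℝ)..x, (1 + t ^ p) ^ (-(1:ℝ)) := by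
    intro x
    simp only [arctanp, ← Real.rpow_neg_one]
  have h1 := GenAux.key (c := 1 / p) hp (by positivity) hr hs
  have h2 := GenAux.key (c := 1) hp one_pos hr hs
  simp only [ea, eb]
  exact ⟨h1, h2⟩
end

section
/- For every k > 1, every p > 1, and all r, s ∈ (0,1) with s ≤ r, one has (arcsin_p(s)/arcsin_p(r))^k ≤ arcsin_p(s^k)/arcsin_p(r^k), (artanh_p(s)/artanh_p(r))^k ≤ artanh_p(s^k)/artanh_p(r^k), and arsinh_p(s^k)/arsinh_p(r^k) ≤ (arsinh_p(s)/arsinh_p(r))^k. -/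
open Real

/-!
Write `F x = ∫₀ˣ g` with `g t = (1 + c tᵖ)ᵉ`. Each inequality says that
`Ψ x = log F(xᵏ) - k log F(x)` is monotone on `(0, 1)`. Since
`Ψ' x = (k / x) (h(xᵏ) - h(x))` with `h x = x g(x) / F(x)`, and `xᵏ ≤ x`, it suffices that `h` is
monotone. Now `(t g(t))' = ρ(t) g(t)` with `ρ t = 1 + p e - p e / (1 + c tᵖ)`, so
`h x = ∫₀ˣ ρ g / ∫₀ˣ g` is a `g`-weighted mean of `ρ` over `[0, x]`; it moves in `x` in the same
direction as `ρ`, which for `e ≤ 0` increases when `c ≤ 0` (`arcsin_p`, `artanh_p`) and decreases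
when `c ≥ 0` (`arsinh_p`).
-/

open Set MeasureTheory

section WeightedMean

variable {ρ g : ℝ → ℝ} {a x y : ℝ}

theorem integral_mul_mul_integral_le_of_monotoneOn (hay : a ≤ y) (hyx : y ≤ x)
    (hρ : MonotoneOn ρ (Icc a x)) (hg : ∀ t ∈ Icc a x, 0 ≤ g t)
    (hgi : IntervalIntegrable g volume a x)
    (hρgi : IntervalIntegrable (fun t => ρ t * g t) volume a x) :
    (∫ t in a..y, ρ t * g t) * ∫ t in a..x, g t ≤ (∫ t in a..x, ρ t * g t) * ∫ t in a..y, g t := by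
  have hax := hay.trans hyx
  have hay_sub : uIcc a y ⊆ uIcc a x := by
    rw [uIcc_of_le hay, uIcc_of_le hax]; exact Icc_subset_Icc_right hyx
  have hyx_sub : uIcc y x ⊆ uIcc a x := by
    rw [uIcc_of_le hyx, uIcc_of_le hax]; exact Icc_subset_Icc_left hay
  have hA : 0 ≤ ∫ t in a..y, g t :=
    intervalIntegral.integral_nonneg hay fun t ht => hg t ⟨ht.1, ht.2.trans hyx⟩
  have hB : 0 ≤ ∫ t in y..x, g t :=
    intervalIntegral.integral_nonneg hyx fun t ht => hg t ⟨hay.trans ht.1, ht.2⟩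
  have hP : (∫ t in a..y, ρ t * g t) ≤ ρ y * ∫ t in a..y, g t := by
    rw [← intervalIntegral.integral_const_mul]
    refine intervalIntegral.integral_mono_on hay (hρgi.mono_set hay_sub)
      ((hgi.mono_set hay_sub).const_mul _)
      fun t ht => mul_le_mul_of_nonneg_right ?_ (hg t ⟨ht.1, ht.2.trans hyx⟩)
    exact hρ ⟨ht.1, ht.2.trans hyx⟩ ⟨hay, hyx⟩ ht.2
  have hQ : ρ y * (∫ t in y..x, g t) ≤ ∫ t in y..x, ρ t * g t := by
    rw [← intervalIntegral.integral_const_mul]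
    refine intervalIntegral.integral_mono_on hyx ((hgi.mono_set hyx_sub).const_mul _)
      (hρgi.mono_set hyx_sub)
      fun t ht => mul_le_mul_of_nonneg_right ?_ (hg t ⟨hay.trans ht.1, ht.2⟩)
    exact hρ ⟨hay, hyx⟩ ⟨hay.trans ht.1, ht.2⟩ ht.1
  rw [← intervalIntegral.integral_add_adjacent_intervals (hgi.mono_set hay_sub)
      (hgi.mono_set hyx_sub),
    ← intervalIntegral.integral_add_adjacent_intervals (hρgi.mono_set hay_sub)
      (hρgi.mono_set hyx_sub)]
  nlinarith [mul_le_mul_of_nonneg_right hP hB, mul_le_mul_of_nonneg_right hQ hA]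

theorem integral_mul_mul_integral_le_of_antitoneOn (hay : a ≤ y) (hyx : y ≤ x)
    (hρ : AntitoneOn ρ (Icc a x)) (hg : ∀ t ∈ Icc a x, 0 ≤ g t)
    (hgi : IntervalIntegrable g volume a x)
    (hρgi : IntervalIntegrable (fun t => ρ t * g t) volume a x) :
    (∫ t in a..x, ρ t * g t) * ∫ t in a..y, g t ≤ (∫ t in a..y, ρ t * g t) * ∫ t in a..x, g t := by
  have h := integral_mul_mul_integral_le_of_monotoneOn hay hyx hρ.neg hg hgi
    (by simpa only [neg_mul, Pi.neg_def] using hρgi.neg)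
  simp only [neg_mul, intervalIntegral.integral_neg] at h
  linarith

end WeightedMean

section IntegralOnIco

variable {ρ g : ℝ → ℝ} {x : ℝ}

theorem intervalIntegrable_of_continuousOn_Ico (hg : ContinuousOn g (Ico 0 1))
    (hx : x ∈ Ico (0:ℝ) 1) : IntervalIntegrable g volume 0 x :=
  (hg.mono (Icc_subset_Ico_right hx.2)).intervalIntegrable_of_Icc hx.1

theorem integral_pos_of_continuousOn_Ico (hg : ContinuousOn g (Ico 0 1))
    (hg0 : ∀ t ∈ Ico (0:ℝ) 1, 0 < g t) (hx : x ∈ Ioo (0:ℝ) 1) :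
    0 < ∫ t in (0:ℝ)..x, g t :=
  intervalIntegral.intervalIntegral_pos_of_pos_on
    (intervalIntegrable_of_continuousOn_Ico hg (Ioo_subset_Ico_self hx))
    (fun t ht => hg0 t ⟨ht.1.le, ht.2.trans hx.2⟩) hx.1

theorem hasDerivAt_integral_of_continuousOn_Ico (hg : ContinuousOn g (Ico 0 1))
    (hx : x ∈ Ioo (0:ℝ) 1) : HasDerivAt (fun x => ∫ t in (0:ℝ)..x, g t) (g x) x :=
  intervalIntegral.integral_hasDerivAt_right
    (intervalIntegrable_of_continuousOn_Ico hg (Ioo_subset_Ico_self hx))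
    ((hg.mono Ioo_subset_Ico_self).stronglyMeasurableAtFilter isOpen_Ioo x hx)
    ((hg.mono Ioo_subset_Ico_self).continuousAt (Ioo_mem_nhds hx.1 hx.2))

theorem integral_mul_eq_mul_of_hasDerivAt (hρg : ContinuousOn (fun t => ρ t * g t) (Ico 0 1))
    (hd : ∀ t ∈ Ico (0:ℝ) 1, HasDerivAt (fun u => u * g u) (ρ t * g t) t)
    (hx : x ∈ Ico (0:ℝ) 1) : ∫ t in (0:ℝ)..x, ρ t * g t = x * g x := by
  rw [intervalIntegral.integral_eq_sub_of_hasDerivAt (f := fun u => u * g u) (fun t ht => hd t ?_)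
    (intervalIntegrable_of_continuousOn_Ico hρg hx), zero_mul, sub_zero]
  rw [uIcc_of_le hx.1] at ht
  exact ⟨ht.1, ht.2.trans_lt hx.2⟩

theorem monotoneOn_mul_div_integral (hg : ContinuousOn g (Ico 0 1))
    (hg0 : ∀ t ∈ Ico (0:ℝ) 1, 0 < g t) (hρ : ContinuousOn ρ (Ico 0 1))
    (hρm : MonotoneOn ρ (Ico 0 1))
    (hd : ∀ t ∈ Ico (0:ℝ) 1, HasDerivAt (fun u => u * g u) (ρ t * g t) t) :
    MonotoneOn (fun x => x * g x / ∫ t in (0:ℝ)..x, g t) (Ioo 0 1) := by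
  intro y hy x hx hyx
  have hρg : ContinuousOn (fun t => ρ t * g t) (Ico 0 1) := hρ.mul hg
  dsimp only
  rw [← integral_mul_eq_mul_of_hasDerivAt hρg hd (Ioo_subset_Ico_self hy),
    ← integral_mul_eq_mul_of_hasDerivAt hρg hd (Ioo_subset_Ico_self hx),
    div_le_div_iff₀ (integral_pos_of_continuousOn_Ico hg hg0 hy)
      (integral_pos_of_continuousOn_Ico hg hg0 hx)]
  exact integral_mul_mul_integral_le_of_monotoneOn hy.1.le hyx
    (hρm.mono (Icc_subset_Ico_right hx.2)) (fun t ht => (hg0 t ⟨ht.1, ht.2.trans_lt hx.2⟩).le)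
    (intervalIntegrable_of_continuousOn_Ico hg (Ioo_subset_Ico_self hx))
    (intervalIntegrable_of_continuousOn_Ico hρg (Ioo_subset_Ico_self hx))

theorem antitoneOn_mul_div_integral (hg : ContinuousOn g (Ico 0 1))
    (hg0 : ∀ t ∈ Ico (0:ℝ) 1, 0 < g t) (hρ : ContinuousOn ρ (Ico 0 1))
    (hρa : AntitoneOn ρ (Ico 0 1))
    (hd : ∀ t ∈ Ico (0:ℝ) 1, HasDerivAt (fun u => u * g u) (ρ t * g t) t) :
    AntitoneOn (fun x => x * g x / ∫ t in (0:ℝ)..x, g t) (Ioo 0 1) := by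
  intro y hy x hx hyx
  have hρg : ContinuousOn (fun t => ρ t * g t) (Ico 0 1) := hρ.mul hg
  dsimp only
  rw [← integral_mul_eq_mul_of_hasDerivAt hρg hd (Ioo_subset_Ico_self hy),
    ← integral_mul_eq_mul_of_hasDerivAt hρg hd (Ioo_subset_Ico_self hx),
    div_le_div_iff₀ (integral_pos_of_continuousOn_Ico hg hg0 hx)
      (integral_pos_of_continuousOn_Ico hg hg0 hy)]
  exact integral_mul_mul_integral_le_of_antitoneOn hy.1.le hyx
    (hρa.mono (Icc_subset_Ico_right hx.2)) (fun t ht => (hg0 t ⟨ht.1, ht.2.trans_lt hx.2⟩).le)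
    (intervalIntegrable_of_continuousOn_Ico hg (Ioo_subset_Ico_self hx))
    (intervalIntegrable_of_continuousOn_Ico hρg (Ioo_subset_Ico_self hx))

end IntegralOnIco

section PowerRatio

variable {F f : ℝ → ℝ} {k r s x : ℝ}

theorem rpow_mem_Ioo_zero_one (hx : x ∈ Ioo (0:ℝ) 1) (hk : 0 < k) : x ^ k ∈ Ioo (0:ℝ) 1 :=
  ⟨rpow_pos_of_pos hx.1 k, rpow_lt_one hx.1.le hx.2 hk⟩

theorem hasDerivAt_log_comp_rpow_sub_mul_log (hF : ∀ x ∈ Ioo (0:ℝ) 1, HasDerivAt F (f x) x)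
    (hF0 : ∀ x ∈ Ioo (0:ℝ) 1, 0 < F x) (hk : 0 < k) (hx : x ∈ Ioo (0:ℝ) 1) :
    HasDerivAt (fun x => log (F (x ^ k)) - k * log (F x))
      (k / x * (x ^ k * f (x ^ k) / F (x ^ k) - x * f x / F x)) x := by
  have hxk := rpow_mem_Ioo_zero_one hx hk
  refine ((((hF _ hxk).comp x (hasDerivAt_rpow_const (Or.inl hx.1.ne'))).log
    (hF0 _ hxk).ne').sub (((hF x hx).log (hF0 x hx).ne').const_mul k)).congr_deriv ?_
  have := (hF0 _ hxk).ne'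
  have := (hF0 x hx).ne'
  have := hx.1.ne'
  rw [Function.comp_apply, rpow_sub_one hx.1.ne']
  field_simp

theorem rpow_div_le_div_comp_rpow (hF : ∀ x ∈ Ioo (0:ℝ) 1, HasDerivAt F (f x) x)
    (hF0 : ∀ x ∈ Ioo (0:ℝ) 1, 0 < F x) (hmono : MonotoneOn (fun x => x * f x / F x) (Ioo 0 1))
    (hk : 1 ≤ k) (hr : r ∈ Ioo (0:ℝ) 1) (hs : s ∈ Ioo (0:ℝ) 1) (hsr : s ≤ r) :
    (F s / F r) ^ k ≤ F (s ^ k) / F (r ^ k) := by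
  have hk0 : 0 < k := zero_lt_one.trans_le hk
  have hΨ' := fun x (hx : x ∈ Ioo (0:ℝ) 1) => hasDerivAt_log_comp_rpow_sub_mul_log hF hF0 hk0 hx
  have hΨ : AntitoneOn (fun x => log (F (x ^ k)) - k * log (F x)) (Ioo 0 1) := by
    refine antitoneOn_of_hasDerivWithinAt_nonpos (convex_Ioo 0 1)
      (fun x hx => (hΨ' x hx).continuousAt.continuousWithinAt)
      (fun x hx => (hΨ' x (interior_subset hx)).hasDerivWithinAt) fun x hx => ?_
    rw [interior_Ioo] at hx
    refine mul_nonpos_of_nonneg_of_nonpos (div_pos hk0 hx.1).le (sub_nonpos.2 ?_)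
    exact hmono (rpow_mem_Ioo_zero_one hx hk0) hx (rpow_le_self_of_le_one hx.1.le hx.2.le hk)
  have hFs := hF0 s hs
  have hFr := hF0 r hr
  have hFsk := hF0 _ (rpow_mem_Ioo_zero_one hs hk0)
  have hFrk := hF0 _ (rpow_mem_Ioo_zero_one hr hk0)
  rw [← log_le_log_iff (rpow_pos_of_pos (div_pos hFs hFr) k) (div_pos hFsk hFrk),
    log_rpow (div_pos hFs hFr), log_div hFs.ne' hFr.ne', log_div hFsk.ne' hFrk.ne']
  linarith [hΨ hs hr hsr]

theorem div_comp_rpow_le_rpow_div (hF : ∀ x ∈ Ioo (0:ℝ) 1, HasDerivAt F (f x) x)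
    (hF0 : ∀ x ∈ Ioo (0:ℝ) 1, 0 < F x) (hanti : AntitoneOn (fun x => x * f x / F x) (Ioo 0 1))
    (hk : 1 ≤ k) (hr : r ∈ Ioo (0:ℝ) 1) (hs : s ∈ Ioo (0:ℝ) 1) (hsr : s ≤ r) :
    F (s ^ k) / F (r ^ k) ≤ (F s / F r) ^ k := by
  have hk0 : 0 < k := zero_lt_one.trans_le hk
  have hΨ' := fun x (hx : x ∈ Ioo (0:ℝ) 1) => hasDerivAt_log_comp_rpow_sub_mul_log hF hF0 hk0 hx
  have hΨ : MonotoneOn (fun x => log (F (x ^ k)) - k * log (F x)) (Ioo 0 1) := by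
    refine monotoneOn_of_hasDerivWithinAt_nonneg (convex_Ioo 0 1)
      (fun x hx => (hΨ' x hx).continuousAt.continuousWithinAt)
      (fun x hx => (hΨ' x (interior_subset hx)).hasDerivWithinAt) fun x hx => ?_
    rw [interior_Ioo] at hx
    refine mul_nonneg (div_pos hk0 hx.1).le (sub_nonneg.2 ?_)
    exact hanti (rpow_mem_Ioo_zero_one hx hk0) hx (rpow_le_self_of_le_one hx.1.le hx.2.le hk)
  have hFs := hF0 s hs
  have hFr := hF0 r hr
  have hFsk := hF0 _ (rpow_mem_Ioo_zero_one hs hk0)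
  have hFrk := hF0 _ (rpow_mem_Ioo_zero_one hr hk0)
  rw [← log_le_log_iff (div_pos hFsk hFrk) (rpow_pos_of_pos (div_pos hFs hFr) k),
    log_rpow (div_pos hFs hFr), log_div hFs.ne' hFr.ne', log_div hFsk.ne' hFrk.ne']
  linarith [hΨ hs hr hsr]

end PowerRatio

/-- `arcsin_p`, `artanh_p` and `arsinh_p` are the cases
`(c, e) = (-1, -1/p), (-1, -1), (1, -1/p)`. -/
noncomputable def binomialIntegral (c e p x : ℝ) : ℝ := ∫ t in (0:ℝ)..x, (1 + c * t ^ p) ^ e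

section BinomialIntegral

variable {c e p k r s t : ℝ}

theorem one_add_mul_rpow_pos (hc : -1 ≤ c) (hp : 0 < p) (ht : t ∈ Ico (0:ℝ) 1) :
    0 < 1 + c * t ^ p := by
  nlinarith [mul_nonneg (neg_le_iff_add_nonneg.1 hc) (rpow_nonneg ht.1 p),
    rpow_lt_one ht.1 ht.2 hp]

theorem hasDerivAt_mul_one_add_mul_rpow (hp : 1 ≤ p) (ht : 0 ≤ t) (hw : 0 < 1 + c * t ^ p) :
    HasDerivAt (fun u => u * (1 + c * u ^ p) ^ e)
      ((1 + p * e - p * e * (1 + c * t ^ p)⁻¹) * (1 + c * t ^ p) ^ e) t := by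
  have hw' := ((hasDerivAt_rpow_const (x := t) (Or.inr hp)).const_mul c).const_add 1
  refine ((hasDerivAt_id t).mul (hw'.rpow_const (p := e) (Or.inl hw.ne'))).congr_deriv ?_
  have htp : t * t ^ (p - 1) = t ^ p := by
    rw [mul_comm, ← rpow_add_one' ht (by linarith), sub_add_cancel]
  rw [rpow_sub_one hw.ne']
  simp only [id]
  field_simp
  linear_combination c * p * e * htp

theorem continuousOn_one_add_mul_rpow_rpow (hc : -1 ≤ c) (hp : 0 < p) :
    ContinuousOn (fun t => (1 + c * t ^ p) ^ e) (Ico 0 1) :=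
  (continuous_const.add (continuous_const.mul (continuous_rpow_const hp.le))).continuousOn
    |>.rpow_const fun _ ht => Or.inl (one_add_mul_rpow_pos hc hp ht).ne'

theorem continuousOn_one_add_mul_rpow_inv (hc : -1 ≤ c) (hp : 0 < p) :
    ContinuousOn (fun t => 1 + p * e - p * e * (1 + c * t ^ p)⁻¹) (Ico 0 1) :=
  continuousOn_const.sub <| continuousOn_const.mul <|
    (continuous_const.add (continuous_const.mul (continuous_rpow_const hp.le))).continuousOn.inv₀
      fun _ ht => (one_add_mul_rpow_pos hc hp ht).ne'

theorem monotoneOn_one_add_mul_rpow_inv (hc : -1 ≤ c) (hc0 : c ≤ 0) (he : e ≤ 0) (hp : 0 < p) :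
    MonotoneOn (fun t => 1 + p * e - p * e * (1 + c * t ^ p)⁻¹) (Ico 0 1) := by
  intro a ha b hb hab
  have hw : 1 + c * b ^ p ≤ 1 + c * a ^ p :=
    add_le_add_right (mul_le_mul_of_nonpos_left (rpow_le_rpow ha.1 hab hp.le) hc0) 1
  exact sub_le_sub_left (mul_le_mul_of_nonpos_left (inv_anti₀ (one_add_mul_rpow_pos hc hp hb) hw)
    (mul_nonpos_of_nonneg_of_nonpos hp.le he)) _

theorem antitoneOn_one_add_mul_rpow_inv (hc : 0 ≤ c) (he : e ≤ 0) (hp : 0 < p) :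
    AntitoneOn (fun t => 1 + p * e - p * e * (1 + c * t ^ p)⁻¹) (Ico 0 1) := by
  intro a ha b hb hab
  have hw : 1 + c * a ^ p ≤ 1 + c * b ^ p :=
    add_le_add_right (mul_le_mul_of_nonneg_left (rpow_le_rpow ha.1 hab hp.le) hc) 1
  have ha' := one_add_mul_rpow_pos (by linarith : (-1:ℝ) ≤ c) hp ha
  exact sub_le_sub_left (mul_le_mul_of_nonpos_left (inv_anti₀ ha' hw)
    (mul_nonpos_of_nonneg_of_nonpos hp.le he)) _

theorem binomialIntegral_rpow_div_le (hc : -1 ≤ c) (hc0 : c ≤ 0) (he : e ≤ 0) (hp : 1 ≤ p)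
    (hk : 1 ≤ k) (hr : r ∈ Ioo (0:ℝ) 1) (hs : s ∈ Ioo (0:ℝ) 1) (hsr : s ≤ r) :
    (binomialIntegral c e p s / binomialIntegral c e p r) ^ k ≤
      binomialIntegral c e p (s ^ k) / binomialIntegral c e p (r ^ k) := by
  have hp0 : 0 < p := zero_lt_one.trans_le hp
  have hg := continuousOn_one_add_mul_rpow_rpow (e := e) hc hp0
  have hg0 : ∀ t ∈ Ico (0:ℝ) 1, 0 < (1 + c * t ^ p) ^ e :=
    fun t ht => rpow_pos_of_pos (one_add_mul_rpow_pos hc hp0 ht) e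
  refine rpow_div_le_div_comp_rpow (fun x hx => hasDerivAt_integral_of_continuousOn_Ico hg hx)
    (fun x hx => integral_pos_of_continuousOn_Ico hg hg0 hx) ?_ hk hr hs hsr
  exact monotoneOn_mul_div_integral hg hg0 (continuousOn_one_add_mul_rpow_inv hc hp0)
    (monotoneOn_one_add_mul_rpow_inv hc hc0 he hp0)
    fun t ht => hasDerivAt_mul_one_add_mul_rpow hp ht.1 (one_add_mul_rpow_pos hc hp0 ht)

theorem binomialIntegral_div_le_rpow (hc : 0 ≤ c) (he : e ≤ 0) (hp : 1 ≤ p)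
    (hk : 1 ≤ k) (hr : r ∈ Ioo (0:ℝ) 1) (hs : s ∈ Ioo (0:ℝ) 1) (hsr : s ≤ r) :
    binomialIntegral c e p (s ^ k) / binomialIntegral c e p (r ^ k) ≤
      (binomialIntegral c e p s / binomialIntegral c e p r) ^ k := by
  have hp0 : 0 < p := zero_lt_one.trans_le hp
  have hc1 : -1 ≤ c := by linarith
  have hg := continuousOn_one_add_mul_rpow_rpow (e := e) hc1 hp0
  have hg0 : ∀ t ∈ Ico (0:ℝ) 1, 0 < (1 + c * t ^ p) ^ e :=
    fun t ht => rpow_pos_of_pos (one_add_mul_rpow_pos hc1 hp0 ht) e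
  refine div_comp_rpow_le_rpow_div (fun x hx => hasDerivAt_integral_of_continuousOn_Ico hg hx)
    (fun x hx => integral_pos_of_continuousOn_Ico hg hg0 hx) ?_ hk hr hs hsr
  exact antitoneOn_mul_div_integral hg hg0 (continuousOn_one_add_mul_rpow_inv hc1 hp0)
    (antitoneOn_one_add_mul_rpow_inv hc he hp0)
    fun t ht => hasDerivAt_mul_one_add_mul_rpow hp ht.1 (one_add_mul_rpow_pos hc1 hp0 ht)

end BinomialIntegral

theorem arcsinp_eq_binomialIntegral (p : ℝ) : arcsinp p = binomialIntegral (-1) (-1 / p) p := by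
  ext x
  simp only [arcsinp, binomialIntegral, neg_one_mul, ← sub_eq_add_neg]

theorem artanhp_eq_binomialIntegral (p : ℝ) : artanhp p = binomialIntegral (-1) (-1) p := by
  ext x
  simp only [artanhp, binomialIntegral, neg_one_mul, ← sub_eq_add_neg, rpow_neg_one]

theorem arsinhp_eq_binomialIntegral (p : ℝ) : arsinhp p = binomialIntegral 1 (-1 / p) p := by
  ext x
  simp only [arsinhp, binomialIntegral, one_mul]

theorem ratio_inequalities (k p r s : ℝ) (hk : 1 < k) (hp : 1 < p)
    (hr : r ∈ Set.Ioo (0:ℝ) 1) (hs : s ∈ Set.Ioo (0:ℝ) 1) (hsr : s ≤ r) :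
    (arcsinp p s / arcsinp p r) ^ k ≤ arcsinp p (s ^ k) / arcsinp p (r ^ k) ∧
      (artanhp p s / artanhp p r) ^ k ≤ artanhp p (s ^ k) / artanhp p (r ^ k) ∧
      arsinhp p (s ^ k) / arsinhp p (r ^ k) ≤ (arsinhp p s / arsinhp p r) ^ k := by
  have he : -1 / p ≤ 0 := div_nonpos_of_nonpos_of_nonneg (by norm_num) (by linarith)
  rw [arcsinp_eq_binomialIntegral, artanhp_eq_binomialIntegral, arsinhp_eq_binomialIntegral]
  exact ⟨binomialIntegral_rpow_div_le le_rfl (by norm_num) he hp.le hk.le hr hs hsr,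
    binomialIntegral_rpow_div_le le_rfl (by norm_num) (by norm_num) hp.le hk.le hr hs hsr,
    binomialIntegral_div_le_rpow zero_le_one he hp.le hk.le hr hs hsr⟩
end

section
/- (Subadditivity of sin_p.) Let p > 1 and let a, b, c ∈ (0,1) satisfy arcsin_p(a) < π_p/4, arcsin_p(b) < π_p/4, and arcsin_p(c) = arcsin_p(a) + arcsin_p(b). Then c ≤ a + b. (Equivalently, sin_p(r+s) ≤ sin_p(r) + sin_p(s) for r, s ∈ (0, π_p/4), where sin_p is the inverse of arcsin_p.) -/
open Real

lemma arcsinp_cont (p : ℝ) (hp : 1 < p) :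
    ContinuousOn (fun t : ℝ => (1 - t ^ p) ^ (-1 / p)) (Set.Ico (0:ℝ) 1) := by
  intro t ht
  have h1 : 0 < 1 - t ^ p := by
    have : t ^ p < 1 := Real.rpow_lt_one ht.1 ht.2 (by linarith)
    linarith
  apply ContinuousAt.continuousWithinAt
  have hinner : ContinuousAt (fun t : ℝ => 1 - t ^ p) t :=
    continuousAt_const.sub (Real.continuousAt_rpow_const t p (Or.inr (by linarith)))
  exact hinner.rpow_const (Or.inl h1.ne')

lemma arcsinp_pos_on (p : ℝ) (hp : 1 < p) {t : ℝ} (h0 : 0 ≤ t) (h1 : t < 1) :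
    0 < (1 - t ^ p) ^ (-1 / p) := by
  have : t ^ p < 1 := Real.rpow_lt_one h0 h1 (by linarith)
  exact Real.rpow_pos_of_pos (by linarith) _

lemma arcsinp_mono_integrand (p : ℝ) (hp : 1 < p) {s t : ℝ} (h0 : 0 ≤ s) (hst : s ≤ t)
    (h1 : t < 1) : (1 - s ^ p) ^ (-1 / p) ≤ (1 - t ^ p) ^ (-1 / p) := by
  have hsp : s ^ p ≤ t ^ p := Real.rpow_le_rpow h0 hst (by linarith)
  have htp : t ^ p < 1 := Real.rpow_lt_one (le_trans h0 hst) h1 (by linarith)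
  have hz : (-1)/p ≤ 0 := by
    apply div_nonpos_of_nonpos_of_nonneg <;> linarith
  exact Real.rpow_le_rpow_of_nonpos (by linarith) (by linarith) hz

lemma arcsinp_integrable (p : ℝ) (hp : 1 < p) {u v : ℝ} (hu : 0 ≤ u) (hv : v < 1)
    (huv : u ≤ v) :
    IntervalIntegrable (fun t : ℝ => (1 - t ^ p) ^ (-1 / p)) MeasureTheory.volume u v := by
  apply ContinuousOn.intervalIntegrable
  apply (arcsinp_cont p hp).mono
  rw [Set.uIcc_of_le huv]
  exact fun x hx => ⟨le_trans hu hx.1, lt_of_le_of_lt hx.2 hv⟩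

lemma arcsinp_split (p x y : ℝ)
    (h1 : IntervalIntegrable (fun t : ℝ => (1 - t ^ p) ^ (-1 / p)) MeasureTheory.volume 0 x)
    (h2 : IntervalIntegrable (fun t : ℝ => (1 - t ^ p) ^ (-1 / p)) MeasureTheory.volume x y) :
    arcsinp p y = arcsinp p x + ∫ t in x..y, (1 - t ^ p) ^ (-1 / p) := by
  rw [arcsinp, arcsinp]
  exact (intervalIntegral.integral_add_adjacent_intervals h1 h2).symm

/-- Subadditivity of `sin_p`. -/
theorem sinp_subadditive (p a b c : ℝ) (hp : 1 < p)
    (ha : a ∈ Set.Ioo (0:ℝ) 1) (hb : b ∈ Set.Ioo (0:ℝ) 1) (hc : c ∈ Set.Ioo (0:ℝ) 1)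
    (ha' : arcsinp p a < pip p / 4) (hb' : arcsinp p b < pip p / 4)
    (hc' : arcsinp p c = arcsinp p a + arcsinp p b) :
    c ≤ a + b := by
  by_contra h
  push_neg at h
  have hab1 : a + b < 1 := lt_trans h hc.2
  have hc1 : c < 1 := hc.2
  have hi1 := arcsinp_integrable p hp le_rfl (lt_trans (by linarith [hb.1]) hab1) ha.1.le
  have hi2 := arcsinp_integrable p hp ha.1.le hab1 (by linarith [hb.1])
  have hi3 := arcsinp_integrable p hp le_rfl (by linarith [ha.1]) hb.1.le
  have hi4 := arcsinp_integrable p hp (show (0:ℝ) ≤ a + b by linarith [ha.1, hb.1]) hc1 h.le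
  have hi5 := arcsinp_integrable p hp le_rfl hab1 (by linarith [ha.1, hb.1])
  have hsplit := arcsinp_split p a (a + b) hi1 hi2
  have hsub : arcsinp p b ≤ ∫ t in a..(a+b), (1 - t ^ p) ^ (-1 / p) := by
    have hshift : (∫ t in (0:ℝ)..b, (1 - (a + t) ^ p) ^ (-1 / p))
        = ∫ t in a..(a+b), (1 - t ^ p) ^ (-1 / p) := by
      rw [intervalIntegral.integral_comp_add_left (fun t : ℝ => (1 - t ^ p) ^ (-1 / p)) a,
        add_zero]
    rw [arcsinp, ← hshift]
    apply intervalIntegral.integral_mono_on hb.1.le hi3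
    · have := (hi2.comp_add_left a)
      simpa using this
    · intro x hx
      exact arcsinp_mono_integrand p hp hx.1 (by linarith [ha.1])
        (by linarith [hx.2, hab1])
  have hge : arcsinp p a + arcsinp p b ≤ arcsinp p (a + b) := by
    rw [hsplit]; linarith
  have hlt : arcsinp p (a + b) < arcsinp p c := by
    have hsplit2 := arcsinp_split p (a + b) c hi5 hi4
    have hpos : 0 < ∫ t in (a+b)..c, (1 - t ^ p) ^ (-1 / p) := by
      apply intervalIntegral.intervalIntegral_pos_of_pos_on hi4
      · intro x hx
        exact arcsinp_pos_on p hp (by linarith [ha.1, hb.1, hx.1]) (by linarith [hx.2])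
      · exact h
    linarith
  linarith
end

section
/- (Superadditivity of sinh_p.) Let p > 1 and let a, b, c ∈ (0,1) satisfy arsinh_p(a) < c_p/2, arsinh_p(b) < c_p/2, and arsinh_p(c) = arsinh_p(a) + arsinh_p(b). Then c ≥ a + b. (Equivalently, sinh_p(r+s) ≥ sinh_p(r) + sinh_p(s) for r, s ∈ (0, c_p/2), where sinh_p is the inverse of arsinh_p.) -/
open Real

/-- The constant `c_p = arsinh_p 1`. -/
noncomputable def cp (p : ℝ) : ℝ := arsinhp p 1

theorem g_contOn (p : ℝ) (hp : 1 < p) :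
    ContinuousOn (fun t : ℝ => (1 + t ^ p) ^ (-1 / p)) (Set.Ici 0) := by
  apply ContinuousOn.rpow_const
  · exact (continuousOn_const.add (continuousOn_id.rpow_const
      (fun x _ => Or.inr (by linarith))))
  · intro x hx
    left
    have : (0:ℝ) ≤ x ^ p := Real.rpow_nonneg hx p
    positivity

theorem g_intble (p : ℝ) (hp : 1 < p) {u v : ℝ} (hu : 0 ≤ u) (hv : 0 ≤ v) :
    IntervalIntegrable (fun t : ℝ => (1 + t ^ p) ^ (-1 / p)) MeasureTheory.volume u v := by
  apply ContinuousOn.intervalIntegrable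
  apply (g_contOn p hp).mono
  intro x hx
  rcases Set.mem_uIcc.mp hx with h | h
  · exact le_trans hu h.1
  · exact le_trans hv h.1

/-- Superadditivity of `sinh_p`. -/
theorem sinhp_superadditive (p a b c : ℝ) (hp : 1 < p)
    (ha : a ∈ Set.Ioo (0:ℝ) 1) (hb : b ∈ Set.Ioo (0:ℝ) 1) (hc : c ∈ Set.Ioo (0:ℝ) 1)
    (ha' : arsinhp p a < cp p / 2) (hb' : arsinhp p b < cp p / 2)
    (hc' : arsinhp p c = arsinhp p a + arsinhp p b) :
    a + b ≤ c := by
  set g : ℝ → ℝ := fun t => (1 + t ^ p) ^ (-1 / p) with hg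
  have ha0 := ha.1
  have hb0 := hb.1
  have hc0 := hc.1
  -- antitone
  have hanti : ∀ s t : ℝ, 0 ≤ s → s ≤ t → g t ≤ g s := by
    intro s t hs hst
    apply Real.rpow_le_rpow_of_nonpos
    · have : (0:ℝ) ≤ s ^ p := Real.rpow_nonneg hs p
      linarith
    · have : s ^ p ≤ t ^ p := Real.rpow_le_rpow hs hst (by linarith)
      linarith
    · have hp0 : 0 < p := by linarith
      rw [neg_div]
      exact neg_nonpos.mpr (by positivity)
  -- positivity
  have hpos : ∀ t : ℝ, 0 ≤ t → 0 < g t := by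
    intro t ht
    apply Real.rpow_pos_of_pos
    have : (0:ℝ) ≤ t ^ p := Real.rpow_nonneg ht p
    linarith
  -- subadditivity: arsinhp p (a+b) ≤ arsinhp p a + arsinhp p b
  have hsub : arsinhp p (a + b) ≤ arsinhp p a + arsinhp p b := by
    have hsplit : arsinhp p a + ∫ t in a..(a+b), g t = arsinhp p (a + b) :=
      intervalIntegral.integral_add_adjacent_intervals
        (g_intble p hp le_rfl ha0.le) (g_intble p hp ha0.le (by linarith))
    have hcv : (∫ t in a..(a+b), g t) = ∫ t in (0:ℝ)..b, g (a + t) := by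
      rw [intervalIntegral.integral_comp_add_left g a, add_zero]
    have hmono : (∫ t in (0:ℝ)..b, g (a + t)) ≤ ∫ t in (0:ℝ)..b, g t := by
      apply intervalIntegral.integral_mono_on hb0.le
      · apply ContinuousOn.intervalIntegrable
        apply ((g_contOn p hp).comp (continuousOn_const.add continuousOn_id))
        intro x hx
        rw [Set.uIcc_of_le hb0.le] at hx
        exact Set.mem_Ici.mpr (show (0:ℝ) ≤ a + id x by simp only [id]; linarith [hx.1])
      · exact g_intble p hp le_rfl hb0.le
      · intro x hx
        exact hanti x (a + x) hx.1 (by linarith)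
    have : arsinhp p b = ∫ t in (0:ℝ)..b, g t := rfl
    linarith [hsplit, hcv ▸ hmono]
  -- conclude via strict monotonicity
  by_contra h
  push_neg at h
  have hposint : 0 < ∫ t in c..(a+b), g t := by
    apply intervalIntegral.intervalIntegral_pos_of_pos_on
      (g_intble p hp hc0.le (by linarith))
    · intro x hx
      exact hpos x (by linarith [hx.1])
    · exact h
  have hsplit2 : arsinhp p c + ∫ t in c..(a+b), g t = arsinhp p (a + b) :=
    intervalIntegral.integral_add_adjacent_intervals
      (g_intble p hp le_rfl hc0.le) (g_intble p hp hc0.le (by linarith))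
  linarith
end

section
/- For every p > 1 one has 6p²/(3p²−2) ≤ π_p, and if moreover 6p² > π² then π_p ≤ 12p²/(6p²−π²). -/
/-!
Put `x = π / p ∈ (0, π)`, so that `π_p = 2π / (p sin x)`. The upper bound on `π_p` is the Taylor
bound `x - x³/6 ≤ sin x`. The lower bound comes from integrating the Jordan-type estimate
`cos t ≤ 1 - 2t²/π²` (valid for `|t| ≤ π`) over `[0, x]`, which gives `sin x ≤ x - 2x³/(3π²)`.
-/

open Real

theorem Real.sin_le_sub_mul_cube {x : ℝ} (hx₀ : 0 ≤ x) (hx : x ≤ π) :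
    sin x ≤ x - 2 / (3 * π ^ 2) * x ^ 3 := by
  let f (t : ℝ) : ℝ := t - 2 / (3 * π ^ 2) * t ^ 3 - sin t
  have hderiv (t : ℝ) : deriv f t = 1 - 2 / π ^ 2 * t ^ 2 - cos t := by
    simp (disch := fun_prop) only [f, deriv_fun_sub, deriv_id'', deriv_fun_mul, deriv_div_const,
      deriv_const', zero_div, zero_mul, deriv_fun_pow, Nat.cast_ofNat, Nat.add_one_sub_one, mul_one,
      zero_add, deriv_sin, sub_left_inj, sub_right_inj]
    field_simp
  have hmono : MonotoneOn f (Set.Icc 0 π) := by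
    refine monotoneOn_of_deriv_nonneg (convex_Icc 0 π) (by fun_prop) (by fun_prop) fun t ht => ?_
    rw [interior_Icc] at ht
    rw [hderiv, sub_nonneg]
    exact cos_le_one_sub_mul_cos_sq (abs_le.2 ⟨by linarith [ht.1, pi_pos], ht.2.le⟩)
  have := hmono ⟨le_rfl, pi_pos.le⟩ ⟨hx₀, hx⟩ hx₀
  simp only [f, sin_zero] at this
  linarith

theorem mul_sin_pi_div_le {p : ℝ} (hp : 1 ≤ p) :
    p * sin (π / p) ≤ π * (3 * p ^ 2 - 2) / (3 * p ^ 2) := by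
  have hp₀ : 0 < p := by linarith
  calc p * sin (π / p) ≤ p * (π / p - 2 / (3 * π ^ 2) * (π / p) ^ 3) :=
        mul_le_mul_of_nonneg_left
          (sin_le_sub_mul_cube (by positivity) (div_le_self pi_pos.le hp)) hp₀.le
    _ = π * (3 * p ^ 2 - 2) / (3 * p ^ 2) := by field_simp

theorem le_mul_sin_pi_div {p : ℝ} (hp : 0 < p) :
    π * (6 * p ^ 2 - π ^ 2) / (6 * p ^ 2) ≤ p * sin (π / p) :=
  calc π * (6 * p ^ 2 - π ^ 2) / (6 * p ^ 2) = p * (π / p - (π / p) ^ 3 / 6) := by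
        field_simp
    _ ≤ p * sin (π / p) := mul_le_mul_of_nonneg_left (sin_ge_sub_cube (by positivity)) hp.le

theorem pip_bounds (p : ℝ) (hp : 1 < p) :
    6 * p ^ 2 / (3 * p ^ 2 - 2) ≤ pip p ∧
      (π ^ 2 < 6 * p ^ 2 → pip p ≤ 12 * p ^ 2 / (6 * p ^ 2 - π ^ 2)) := by
  have hp₀ : 0 < p := by linarith
  have hsin : 0 < p * sin (π / p) :=
    mul_pos hp₀ (sin_pos_of_pos_of_lt_pi (by positivity) (div_lt_self pi_pos hp))
  constructor
  · calc 6 * p ^ 2 / (3 * p ^ 2 - 2) = 2 * π / (π * (3 * p ^ 2 - 2) / (3 * p ^ 2)) := by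
          field_simp
          ring
      _ ≤ pip p := div_le_div_of_nonneg_left (by positivity) hsin (mul_sin_pi_div_le hp.le)
  · intro hπ
    have hpos : 0 < π * (6 * p ^ 2 - π ^ 2) / (6 * p ^ 2) :=
      div_pos (mul_pos pi_pos (by linarith)) (by positivity)
    calc pip p ≤ 2 * π / (π * (6 * p ^ 2 - π ^ 2) / (6 * p ^ 2)) :=
          div_le_div_of_nonneg_left (by positivity) hpos (le_mul_sin_pi_div hp₀)
      _ = 12 * p ^ 2 / (6 * p ^ 2 - π ^ 2) := by
          field_simp
          ring
end

section
/- For every p > 1 and every x ∈ (0,1), the following identities hold: arcsin_p(x/(1+x^p)^(1/p)) = arctan_p(x); arcsin_p(x) = arctan_p(x/(1−x^p)^(1/p)); arccos_p(x) = arctan_p((1−x^p)^(1/p)/x); and arccos_p(1/(1+x^p)^(1/p)) = arctan_p(x). -/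
/-!
All four identities come from the single substitution `t = s (1 + ε sᵖ)^(-1/p)`, for which
`1 - ε tᵖ = (1 + ε sᵖ)⁻¹` and `dt = (1 + ε sᵖ)^(-1/p - 1) ds`. With `ε = 1` it turns the
integrand of `arcsin_p` into that of `arctan_p`, and with `ε = -1` the other way round. The two
`arccos_p` identities reduce to these after unfolding `arccos_p`, since `(1 - (1 - xᵖ))^(1/p) = x`
and `1 - 1 / (1 + xᵖ) = xᵖ / (1 + xᵖ)`.
-/

open Real

/-- The generalized inverse cosine: `arccos_p x = arcsin_p ((1 - xᵖ)^(1/p))`. -/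
noncomputable def arccosp (p x : ℝ) : ℝ := arcsinp p ((1 - x ^ p) ^ (1 / p))

open Set intervalIntegral

section Substitution

variable {p ε : ℝ}

lemma one_add_mul_rpow_pos_of_mem_Icc (hp : 0 ≤ p) {s x : ℝ} (hs : s ∈ Icc 0 x)
    (hx : 0 < 1 + ε * x ^ p) : 0 < 1 + ε * s ^ p := by
  have hsx : s ^ p ≤ x ^ p := rpow_le_rpow hs.1 hs.2 hp
  have hs0 : 0 ≤ s ^ p := rpow_nonneg hs.1 p
  rcases le_total 0 ε with hε | hε <;> nlinarith

lemma hasDerivAt_mul_one_add_mul_rpow_rpow (hp : 1 ≤ p) {s : ℝ} (hs : 0 ≤ s)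
    (hw : 0 < 1 + ε * s ^ p) :
    HasDerivAt (fun s => s * (1 + ε * s ^ p) ^ (-1 / p)) ((1 + ε * s ^ p) ^ (-1 / p - 1)) s := by
  have hw' : HasDerivAt (fun s => 1 + ε * s ^ p) (ε * (p * s ^ (p - 1))) s :=
    ((hasDerivAt_rpow_const (Or.inr hp)).const_mul ε).const_add 1
  refine ((hasDerivAt_id' s).mul (hw'.rpow_const (p := -1 / p) (Or.inl hw.ne'))).congr_deriv ?_
  have hsp : s * s ^ (p - 1) = s ^ p := by
    rcases hs.eq_or_lt with rfl | hs
    · rw [zero_mul, zero_rpow (by linarith)]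
    · rw [rpow_sub_one hs.ne', mul_div_cancel₀ _ hs.ne']
  rw [rpow_sub_one hw.ne']
  field_simp
  linear_combination -ε * hsp

lemma one_sub_mul_rpow_mul_rpow_neg_one_div (hp : p ≠ 0) {s : ℝ} (hs : 0 ≤ s)
    (hw : 0 < 1 + ε * s ^ p) :
    1 - ε * (s * (1 + ε * s ^ p) ^ (-1 / p)) ^ p = (1 + ε * s ^ p)⁻¹ := by
  rw [mul_rpow hs (rpow_nonneg hw.le _), ← rpow_mul hw.le, div_mul_cancel₀ _ hp, rpow_neg_one]
  field_simp
  ring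

theorem integral_one_sub_mul_rpow_rpow_eq (hp : 1 ≤ p) (b : ℝ) {x : ℝ} (hx : 0 ≤ x)
    (hw : 0 < 1 + ε * x ^ p) :
    ∫ t in (0:ℝ)..x * (1 + ε * x ^ p) ^ (-1 / p), (1 - ε * t ^ p) ^ b
      = ∫ s in (0:ℝ)..x, (1 + ε * s ^ p) ^ (-b - 1 / p - 1) := by
  have hp0 : 0 < p := by linarith
  have hIcc : uIcc 0 x = Icc 0 x := uIcc_of_le hx
  have hpos : ∀ s ∈ uIcc 0 x, 0 < 1 + ε * s ^ p := fun s hs =>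
    one_add_mul_rpow_pos_of_mem_Icc hp0.le (hIcc ▸ hs) hw
  have hcont : ∀ {c : ℝ}, ContinuousAt (fun s => 1 + ε * s ^ p) c := fun {c} =>
    continuousAt_const.add (continuousAt_const.mul (continuousAt_rpow_const _ _ (Or.inr hp0.le)))
  have hsubst := integral_comp_mul_deriv' (f := fun s => s * (1 + ε * s ^ p) ^ (-1 / p))
    (g := fun t => (1 - ε * t ^ p) ^ b)
    (fun s hs => hasDerivAt_mul_one_add_mul_rpow_rpow hp (hIcc ▸ hs).1 (hpos s hs))
    (fun s hs => (hcont.rpow_const (Or.inl (hpos s hs).ne')).continuousWithinAt)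
    (by
      rintro _ ⟨s, hs, rfl⟩
      refine ContinuousAt.continuousWithinAt (ContinuousAt.rpow_const ?_ (Or.inl ?_))
      · exact continuousAt_const.sub
          (continuousAt_const.mul (continuousAt_rpow_const _ _ (Or.inr hp0.le)))
      · rw [one_sub_mul_rpow_mul_rpow_neg_one_div hp0.ne' (hIcc ▸ hs).1 (hpos s hs)]
        exact (inv_pos.2 (hpos s hs)).ne')
  simp only [zero_mul] at hsubst
  rw [← hsubst]
  refine integral_congr fun s hs => ?_
  have hw := hpos s hs
  simp only [Function.comp_apply]
  rw [one_sub_mul_rpow_mul_rpow_neg_one_div hp0.ne' (hIcc ▸ hs).1 hw, inv_rpow hw.le,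
    ← rpow_neg hw.le, ← rpow_add hw]
  ring_nf

end Substitution

section Identities

variable {p x : ℝ}

lemma rpow_one_div_rpow_self {a : ℝ} (ha : 0 ≤ a) (hp : p ≠ 0) : (a ^ (1 / p)) ^ p = a := by
  rw [one_div, rpow_inv_rpow ha hp]

lemma rpow_rpow_one_div_self {a : ℝ} (ha : 0 ≤ a) (hp : p ≠ 0) : (a ^ p) ^ (1 / p) = a := by
  rw [one_div, rpow_rpow_inv ha hp]

lemma div_rpow_one_div_eq_mul_rpow_neg_one_div {w : ℝ} (hw : 0 ≤ w) :
    x / w ^ (1 / p) = x * w ^ (-1 / p) := by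
  rw [neg_div, rpow_neg hw, div_eq_mul_inv]

theorem arcsinp_div_rpow_one_add_rpow (hp : 1 ≤ p) (hx : 0 ≤ x) :
    arcsinp p (x / (1 + x ^ p) ^ (1 / p)) = arctanp p x := by
  have hw : 0 < 1 + 1 * x ^ p := by positivity
  have hsubst := integral_one_sub_mul_rpow_rpow_eq hp (-1 / p) hx hw
  simp only [one_mul] at hsubst hw
  rw [arcsinp, div_rpow_one_div_eq_mul_rpow_neg_one_div hw.le, hsubst, arctanp]
  refine integral_congr fun s _ => ?_
  rw [show -(-1 / p) - 1 / p - 1 = -1 by ring, rpow_neg_one]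

theorem arcsinp_eq_arctanp_div_rpow_one_sub_rpow (hp : 1 ≤ p) (hx₀ : 0 ≤ x) (hx₁ : x < 1) :
    arcsinp p x = arctanp p (x / (1 - x ^ p) ^ (1 / p)) := by
  have hw : 0 < 1 + -1 * x ^ p := by
    have := rpow_lt_one hx₀ hx₁ (by linarith : 0 < p)
    linarith
  have hsubst := integral_one_sub_mul_rpow_rpow_eq hp (-1) hx₀ hw
  simp only [neg_one_mul, ← sub_eq_add_neg, sub_neg_eq_add, rpow_neg_one] at hsubst hw
  rw [arctanp, div_rpow_one_div_eq_mul_rpow_neg_one_div hw.le, hsubst, arcsinp]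
  refine integral_congr fun s _ => ?_
  rw [show -(-1) - 1 / p - 1 = -1 / p by ring]

theorem arccosp_eq_arctanp_rpow_one_sub_rpow_div (hp : 1 ≤ p) (hx₀ : 0 < x) (hx₁ : x < 1) :
    arccosp p x = arctanp p ((1 - x ^ p) ^ (1 / p) / x) := by
  have hp₀ : 0 < p := by linarith
  have hxp : x ^ p < 1 := rpow_lt_one hx₀.le hx₁ hp₀
  have hy₀ : 0 ≤ (1 - x ^ p) ^ (1 / p) := rpow_nonneg (by linarith) _
  have hy₁ : (1 - x ^ p) ^ (1 / p) < 1 :=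
    rpow_lt_one (by linarith) (by linarith [rpow_pos_of_pos hx₀ p]) (by positivity)
  rw [arccosp, arcsinp_eq_arctanp_div_rpow_one_sub_rpow hp hy₀ hy₁,
    rpow_one_div_rpow_self (by linarith) hp₀.ne', sub_sub_cancel,
    rpow_rpow_one_div_self hx₀.le hp₀.ne']

theorem arccosp_one_div_rpow_one_add_rpow (hp : 1 ≤ p) (hx : 0 ≤ x) :
    arccosp p (1 / (1 + x ^ p) ^ (1 / p)) = arctanp p x := by
  have hp₀ : p ≠ 0 := by linarith
  have hw : 0 < 1 + x ^ p := by positivity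
  have hcompl : 1 - (1 / (1 + x ^ p) ^ (1 / p)) ^ p = x ^ p / (1 + x ^ p) := by
    rw [div_rpow zero_le_one (rpow_nonneg hw.le _), one_rpow, rpow_one_div_rpow_self hw.le hp₀]
    field_simp
    ring
  rw [arccosp, hcompl, div_rpow (by positivity) hw.le, rpow_rpow_one_div_self hx hp₀,
    arcsinp_div_rpow_one_add_rpow hp hx]

end Identities

theorem arcsinp_arccosp_arctanp_identities (p x : ℝ) (hp : 1 < p)
    (hx : x ∈ Set.Ioo (0:ℝ) 1) :
    arcsinp p (x / (1 + x ^ p) ^ (1 / p)) = arctanp p x ∧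
      arcsinp p x = arctanp p (x / (1 - x ^ p) ^ (1 / p)) ∧
      arccosp p x = arctanp p ((1 - x ^ p) ^ (1 / p) / x) ∧
      arccosp p (1 / (1 + x ^ p) ^ (1 / p)) = arctanp p x :=
  ⟨arcsinp_div_rpow_one_add_rpow hp.le hx.1.le,
    arcsinp_eq_arctanp_div_rpow_one_sub_rpow hp.le hx.1.le hx.2,
    arccosp_eq_arctanp_rpow_one_sub_rpow_div hp.le hx.1 hx.2,
    arccosp_one_div_rpow_one_add_rpow hp.le hx.1.le⟩
end

section
/- For every x ∈ (0,1), one has x^(x/√(1−x²)) < (arcsin x)^(arcsin x) < (π/2)^(π/2) · x^(x/√(1−x²)). -/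
/-!
Put `t = arcsin x ∈ (0, π/2)`, so that `x = sin t` and `x / √(1 - x²) = tan t`.
The lower bound follows from `sin t < t < tan t` and `sin t < 1`.
For the upper bound take logarithms: `t log t - tan t log (sin t)` has derivative
`log t - log (sin t) / cos² t > 0`, and it tends to `(π/2) log (π/2)` as `t → π/2⁻`
because `-cos t ≤ tan t log (sin t) ≤ 0`.
-/

open Real Set Filter Topology

theorem StrictMonoOn.lt_of_tendsto_nhdsLT {α β : Type*} [LinearOrder α] [TopologicalSpace α]
    [OrderTopology α] [DenselyOrdered α] [Preorder β] [TopologicalSpace β] [ClosedIciTopology β]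
    {f : α → β} {a b t : α} {L : β}
    (hf : StrictMonoOn f (Ioo a b)) (hlim : Tendsto f (𝓝[<] b) (𝓝 L)) (ht : t ∈ Ioo a b) :
    f t < L := by
  obtain ⟨s, hts, hsb⟩ := exists_between ht.2
  have hs : s ∈ Ioo a b := ⟨ht.1.trans hts, hsb⟩
  have := nhdsLT_neBot_of_exists_lt ⟨a, ht.1.trans ht.2⟩
  refine (hf ht hs hts).trans_le (ge_of_tendsto hlim ?_)
  filter_upwards [Ioo_mem_nhdsLT hsb] with u hu
  exact (hf hs ⟨hs.1.trans hu.1, hu.2⟩ hu.1).le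

namespace Real

lemma sin_mem_Ioo_of_mem_Ioo {u : ℝ} (hu : u ∈ Ioo 0 (π / 2)) : sin u ∈ Ioo 0 1 := by
  have hsin : 0 < sin u := sin_pos_of_pos_of_lt_pi hu.1 (by linarith [hu.2, pi_pos])
  have hcos : 0 < cos u := cos_pos_of_mem_Ioo ⟨by linarith [hu.1, pi_pos], hu.2⟩
  exact ⟨hsin, by nlinarith [sin_sq_add_cos_sq u]⟩

lemma neg_cos_le_tan_mul_log_sin {u : ℝ} (hu : u ∈ Ioo 0 (π / 2)) :
    -cos u ≤ tan u * log (sin u) := by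
  obtain ⟨hsin, hsin1⟩ := sin_mem_Ioo_of_mem_Ioo hu
  have hcos : 0 < cos u := cos_pos_of_mem_Ioo ⟨by linarith [hu.1, pi_pos], hu.2⟩
  calc -cos u ≤ -(1 - sin u) / cos u := by
        rw [neg_div, neg_le_neg_iff, div_le_iff₀ hcos]
        nlinarith [sin_sq_add_cos_sq u]
    _ = tan u * (1 - (sin u)⁻¹) := by
        rw [tan_eq_sin_div_cos]; field_simp; ring
    _ ≤ tan u * log (sin u) :=
        mul_le_mul_of_nonneg_left (one_sub_inv_le_log_of_pos hsin)
          (tan_pos_of_pos_of_lt_pi_div_two hu.1 hu.2).le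

lemma tan_mul_log_sin_nonpos {u : ℝ} (hu : u ∈ Ioo 0 (π / 2)) : tan u * log (sin u) ≤ 0 := by
  obtain ⟨hsin, hsin1⟩ := sin_mem_Ioo_of_mem_Ioo hu
  exact mul_nonpos_of_nonneg_of_nonpos (tan_pos_of_pos_of_lt_pi_div_two hu.1 hu.2).le
    (log_neg hsin hsin1).le

lemma tendsto_tan_mul_log_sin_nhdsLT_pi_div_two :
    Tendsto (fun u => tan u * log (sin u)) (𝓝[<] (π / 2)) (𝓝 0) := by
  have hcos : Tendsto cos (𝓝[<] (π / 2)) (𝓝 0) := by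
    simpa using (continuous_cos.tendsto (π / 2)).mono_left nhdsWithin_le_nhds
  have hIoo : Ioo 0 (π / 2) ∈ 𝓝[<] (π / 2) := Ioo_mem_nhdsLT (by positivity)
  refine tendsto_of_tendsto_of_tendsto_of_le_of_le' (by simpa using hcos.neg) tendsto_const_nhds
    ?_ ?_
  · filter_upwards [hIoo] with u hu using neg_cos_le_tan_mul_log_sin hu
  · filter_upwards [hIoo] with u hu using tan_mul_log_sin_nonpos hu

lemma hasDerivAt_mul_log_sub_tan_mul_log_sin {u : ℝ} (hu : u ∈ Ioo 0 (π / 2)) :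
    HasDerivAt (fun v => v * log v - tan v * log (sin v))
      (log u - log (sin u) / cos u ^ 2) u := by
  obtain ⟨hsin, -⟩ := sin_mem_Ioo_of_mem_Ioo hu
  have hcos : 0 < cos u := cos_pos_of_mem_Ioo ⟨by linarith [hu.1, pi_pos], hu.2⟩
  refine ((hasDerivAt_mul_log hu.1.ne').sub
    ((hasDerivAt_tan hcos.ne').mul ((hasDerivAt_sin u).log hsin.ne'))).congr_deriv ?_
  rw [tan_eq_sin_div_cos]
  field_simp
  ring

lemma strictMonoOn_mul_log_sub_tan_mul_log_sin :
    StrictMonoOn (fun v => v * log v - tan v * log (sin v)) (Ioo 0 (π / 2)) := by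
  refine strictMonoOn_of_hasDerivWithinAt_pos (f' := fun u => log u - log (sin u) / cos u ^ 2)
    (convex_Ioo _ _)
    (fun u hu => (hasDerivAt_mul_log_sub_tan_mul_log_sin hu).continuousAt.continuousWithinAt)
    (fun u hu => ?_) (fun u hu => ?_)
  · rw [interior_Ioo] at hu
    exact (hasDerivAt_mul_log_sub_tan_mul_log_sin hu).hasDerivWithinAt
  · rw [interior_Ioo] at hu
    obtain ⟨hsin, hsin1⟩ := sin_mem_Ioo_of_mem_Ioo hu
    have hlog : log (sin u) < 0 := log_neg hsin hsin1
    have hcos2 : cos u ^ 2 ≤ 1 := by nlinarith [sin_sq_add_cos_sq u]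
    have hcos : 0 < cos u := cos_pos_of_mem_Ioo ⟨by linarith [hu.1, pi_pos], hu.2⟩
    have : log (sin u) / cos u ^ 2 ≤ log (sin u) := by
      rw [div_le_iff₀ (by positivity)]; nlinarith
    linarith [log_lt_log hsin (sin_lt hu.1)]

lemma sin_rpow_tan_lt_rpow_self {t : ℝ} (ht : t ∈ Ioo 0 (π / 2)) : sin t ^ tan t < t ^ t := by
  obtain ⟨hsin, hsin1⟩ := sin_mem_Ioo_of_mem_Ioo ht
  calc sin t ^ tan t < sin t ^ t := rpow_lt_rpow_of_exponent_gt hsin hsin1 (lt_tan ht.1 ht.2)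
    _ < t ^ t := rpow_lt_rpow hsin.le (sin_lt ht.1) ht.1

lemma rpow_self_lt_pi_div_two_rpow_mul_sin_rpow_tan {t : ℝ} (ht : t ∈ Ioo 0 (π / 2)) :
    t ^ t < (π / 2) ^ (π / 2) * sin t ^ tan t := by
  have hlim : Tendsto (fun v => v * log v - tan v * log (sin v)) (𝓝[<] (π / 2))
      (𝓝 (π / 2 * log (π / 2) - 0)) :=
    ((continuous_mul_log.tendsto _).mono_left nhdsWithin_le_nhds).sub
      tendsto_tan_mul_log_sin_nhdsLT_pi_div_two
  have hf := strictMonoOn_mul_log_sub_tan_mul_log_sin.lt_of_tendsto_nhdsLT hlim ht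
  rw [rpow_def_of_pos ht.1, rpow_def_of_pos (by positivity),
    rpow_def_of_pos (sin_mem_Ioo_of_mem_Ioo ht).1, ← exp_add, exp_lt_exp]
  linarith

end Real

theorem arcsin_pow_arcsin_bounds (x : ℝ) (hx : x ∈ Set.Ioo (0:ℝ) 1) :
    x ^ (x / Real.sqrt (1 - x ^ 2)) < Real.arcsin x ^ Real.arcsin x ∧
      Real.arcsin x ^ Real.arcsin x <
        (π / 2) ^ (π / 2) * x ^ (x / Real.sqrt (1 - x ^ 2)) := by
  have ht : arcsin x ∈ Ioo 0 (π / 2) := ⟨arcsin_pos.2 hx.1, arcsin_lt_pi_div_two.2 hx.2⟩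
  have hsin : sin (arcsin x) = x := sin_arcsin (by linarith [hx.1]) hx.2.le
  have lower := sin_rpow_tan_lt_rpow_self ht
  have upper := rpow_self_lt_pi_div_two_rpow_mul_sin_rpow_tan ht
  rw [hsin, tan_arcsin] at lower upper
  exact ⟨lower, upper⟩
end
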